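/- arXiv:math/0703370 — 4 statements merged into one kernel-verified Lean document; each statement's English description precedes it below -/
import Mathlib

section
/- For all natural numbers p, q, r ≥ 0, the intersection matrix of the star-shaped weighted tree Γ_{p,q,r} — which has a central vertex of weight −4 and three legs attached to it: a chain of q vertices of weight −2 followed by a terminal vertex of weight −(p+3); a chain of r vertices of weight −2 followed by a terminal vertex of weight −(q+3); and a chain of p vertices of weight −2 followed by a terminal vertex of weight −(r+3) — is negative definite. -/
/-- The vertex type of a star-shaped tree with `m` legs, leg `i` consisting of a path of
`n i` vertices.  `none` is the central vertex; `some ⟨i, j⟩` is the `j`-th vertex of the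
`i`-th leg (the vertex `j = 0` being the one joined to the central vertex by an edge). -/
abbrev StarVertex (m : ℕ) (n : Fin m → ℕ) : Type := Option ((i : Fin m) × Fin (n i))

/-- The intersection matrix of the star-shaped weighted tree with `m` legs, where the central
vertex has weight `w0` and the `j`-th vertex of the `i`-th leg has weight `w i j`:  diagonal
entries are the weights, off-diagonal entries are `1` for vertices joined by an edge
(consecutive vertices of a leg, or the central vertex and the initial vertex of a leg)
and `0` otherwise. -/
def starMatrix (m : ℕ) (n : Fin m → ℕ) (w0 : ℤ) (w : Fin m → ℕ → ℤ) :
    Matrix (StarVertex m n) (StarVertex m n) ℤ :=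
  Matrix.of fun v v' =>
    match v, v' with
    | none, none => w0
    | none, some ⟨_, j⟩ => if (j : ℕ) = 0 then 1 else 0
    | some ⟨_, j⟩, none => if (j : ℕ) = 0 then 1 else 0
    | some ⟨i, j⟩, some ⟨i', j'⟩ =>
        if (i : ℕ) = (i' : ℕ) then
          if (j : ℕ) = (j' : ℕ) then w i (j : ℕ)
          else if (j : ℕ) + 1 = (j' : ℕ) ∨ (j' : ℕ) + 1 = (j : ℕ) then 1 else 0
        else 0

/-- The weights along a leg consisting of a chain of `k` vertices of weight `-2` followed by a
terminal vertex of weight `-a` (a path of `k + 1` vertices). -/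
def chainW (k : ℕ) (a : ℤ) (j : ℕ) : ℤ := if j < k then -2 else -a

open Finset

section GeneralLemma

/-- A symmetric real matrix which is strictly generalized diagonally dominant (witnessed by a
positive vector `z`) with negative diagonal is negative definite. -/
lemma negdef_of_dom {V : Type*} [Fintype V] [DecidableEq V]
    (A : Matrix V V ℝ) (hsym : ∀ u v, A u v = A v u) (z : V → ℝ) (hz : ∀ v, 0 < z v)
    (hdom : ∀ v, ∑ u ∈ Finset.univ.erase v, |A u v| * z u < -(A v v) * z v) :
    ∀ x : V → ℝ, x ≠ 0 → ∑ v, ∑ u, A v u * x v * x u < 0 := by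
  intro x hx
  -- bound each term
  have key : ∀ v u : V, A v u * x v * x u ≤
      (if u = v then A v v * x v ^ 2 else
        |A v u| * ((z u / z v * x v ^ 2 + z v / z u * x u ^ 2) / 2)) := by
    intro v u
    split_ifs with h
    · subst h; ring_nf; exact le_refl _
    · have h1 : A v u * x v * x u ≤ |A v u| * (|x v| * |x u|) := by
        calc A v u * x v * x u = (A v u * x v) * x u := by ring
        _ ≤ |A v u * x v * x u| := le_abs_self _
        _ = |A v u| * (|x v| * |x u|) := by rw [abs_mul, abs_mul, mul_assoc]
      refine h1.trans (mul_le_mul_of_nonneg_left ?_ (abs_nonneg _))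
      have hzv := hz v; have hzu := hz u
      have amgm : |x v| * |x u| ≤ (z u / z v * x v ^ 2 + z v / z u * x u ^ 2) / 2 := by
        have h2 : 0 ≤ (Real.sqrt (z u / z v) * |x v| - Real.sqrt (z v / z u) * |x u|) ^ 2 :=
          sq_nonneg _
        have e1 : Real.sqrt (z u / z v) ^ 2 = z u / z v := Real.sq_sqrt (by positivity)
        have e2 : Real.sqrt (z v / z u) ^ 2 = z v / z u := Real.sq_sqrt (by positivity)
        have e3 : Real.sqrt (z u / z v) * Real.sqrt (z v / z u) = 1 := by
          rw [← Real.sqrt_mul (by positivity)]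
          rw [show z u / z v * (z v / z u) = 1 by field_simp]
          exact Real.sqrt_one
        have exv : |x v| ^ 2 = x v ^ 2 := sq_abs _
        have exu : |x u| ^ 2 = x u ^ 2 := sq_abs _
        rw [sub_sq, mul_pow, mul_pow, e1, e2, exv, exu] at h2
        have e4 : Real.sqrt (z u / z v) * |x v| * (Real.sqrt (z v / z u) * |x u|)
            = |x v| * |x u| := by
          calc Real.sqrt (z u / z v) * |x v| * (Real.sqrt (z v / z u) * |x u|)
              = (Real.sqrt (z u / z v) * Real.sqrt (z v / z u)) * (|x v| * |x u|) := by ring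
          _ = |x v| * |x u| := by rw [e3]; ring
        rw [mul_assoc 2] at h2
        rw [e4] at h2
        linarith
      exact amgm
  -- notation for the bound
  set B : V → V → ℝ := fun v u => if u = v then A v v * x v ^ 2 else
      |A v u| * ((z u / z v * x v ^ 2 + z v / z u * x u ^ 2) / 2) with hB
  have step1 : ∑ v, ∑ u, A v u * x v * x u ≤ ∑ v, ∑ u, B v u :=
    Finset.sum_le_sum fun v _ => Finset.sum_le_sum fun u _ => key v u
  set C : V → V → ℝ := fun v u => if u = v then A v v * x v ^ 2 else
      |A v u| * (z u / z v) * x v ^ 2 / 2 with hC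
  set D : V → V → ℝ := fun v u => if u = v then 0 else
      |A v u| * (z v / z u) * x u ^ 2 / 2 with hD
  set C' : V → V → ℝ := fun v u => if u = v then 0 else
      |A v u| * (z u / z v) * x v ^ 2 / 2 with hC'
  have hBCD : ∀ v u, B v u = C v u + D v u := by
    intro v u
    simp only [hB, hC, hD]
    split_ifs
    · ring
    · ring
  have hcomm : ∑ v, ∑ u, D v u = ∑ v, ∑ u, C' v u := by
    rw [Finset.sum_comm]
    refine Finset.sum_congr rfl fun v _ => Finset.sum_congr rfl fun u _ => ?_
    simp only [hD, hC']
    rw [hsym v u]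
    by_cases h : u = v
    · subst h; simp
    · rw [if_neg h, if_neg (by exact fun hh => h hh.symm)]
  have hsumC : ∀ v, ∑ u, C v u = A v v * x v ^ 2
      + (∑ u ∈ Finset.univ.erase v, |A u v| * z u) * (x v ^ 2 / (2 * z v)) := by
    intro v
    rw [← Finset.add_sum_erase _ _ (Finset.mem_univ v)]
    congr 1
    · simp [hC]
    · rw [Finset.sum_mul]
      refine Finset.sum_congr rfl fun u hu => ?_
      have hu' : u ≠ v := (Finset.mem_erase.1 hu).1
      simp only [hC, if_neg hu']
      rw [hsym v u]
      have := (hz v).ne'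
      field_simp
  have hsumC' : ∀ v, ∑ u, C' v u =
      (∑ u ∈ Finset.univ.erase v, |A u v| * z u) * (x v ^ 2 / (2 * z v)) := by
    intro v
    rw [← Finset.add_sum_erase _ _ (Finset.mem_univ v)]
    rw [Finset.sum_mul]
    simp only [hC', if_pos rfl, zero_add]
    refine Finset.sum_congr rfl fun u hu => ?_
    have hu' : u ≠ v := (Finset.mem_erase.1 hu).1
    rw [if_neg hu', hsym v u]
    have := (hz v).ne'
    field_simp
  have hBval : ∑ v, ∑ u, B v u
      = ∑ v, (A v v + (∑ u ∈ Finset.univ.erase v, |A u v| * z u) / z v) * x v ^ 2 := by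
    calc ∑ v, ∑ u, B v u = ∑ v, (∑ u, C v u) + ∑ v, (∑ u, D v u) := by
          rw [← Finset.sum_add_distrib]
          exact Finset.sum_congr rfl fun v _ => by
            rw [← Finset.sum_add_distrib]
            exact Finset.sum_congr rfl fun u _ => hBCD v u
    _ = ∑ v, ((∑ u, C v u) + (∑ u, C' v u)) := by
          rw [hcomm, ← Finset.sum_add_distrib]
    _ = _ := by
          refine Finset.sum_congr rfl fun v _ => ?_
          rw [hsumC v, hsumC' v]
          have := (hz v).ne'
          field_simp
          ring
  have hcv : ∀ v, A v v + (∑ u ∈ Finset.univ.erase v, |A u v| * z u) / z v < 0 := by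
    intro v
    have h := hdom v
    have hzv := hz v
    have h2 : (∑ u ∈ Finset.univ.erase v, |A u v| * z u) / z v < -A v v :=
      (div_lt_iff₀ hzv).2 h
    linarith
  obtain ⟨v0, hv0⟩ : ∃ v0, x v0 ≠ 0 := by
    by_contra h
    push_neg at h
    exact hx (funext h)
  have hfin : ∑ v, (A v v + (∑ u ∈ Finset.univ.erase v, |A u v| * z u) / z v) * x v ^ 2
      < 0 := by
    have : ∑ v, (A v v + (∑ u ∈ Finset.univ.erase v, |A u v| * z u) / z v) * x v ^ 2
        < ∑ _v : V, (0:ℝ) := by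
      refine Finset.sum_lt_sum (fun v _ => ?_) ⟨v0, Finset.mem_univ v0, ?_⟩
      · exact mul_nonpos_of_nonpos_of_nonneg (hcv v).le (sq_nonneg _)
      · exact mul_neg_of_neg_of_pos (hcv v0) (by positivity)
    simpa using this
  linarith [step1, hBval ▸ step1, hfin]

end GeneralLemma

section Entries

variable {m : ℕ} {n : Fin m → ℕ} {w0 : ℤ} {w : Fin m → ℕ → ℤ}

lemma sm_nn : starMatrix m n w0 w none none = w0 := rfl

lemma sm_ns (i : Fin m) (j : Fin (n i)) :
    starMatrix m n w0 w none (some ⟨i, j⟩) = if (j : ℕ) = 0 then 1 else 0 := rfl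

lemma sm_sn (i : Fin m) (j : Fin (n i)) :
    starMatrix m n w0 w (some ⟨i, j⟩) none = if (j : ℕ) = 0 then 1 else 0 := rfl

lemma sm_ss (i : Fin m) (j : Fin (n i)) (i' : Fin m) (j' : Fin (n i')) :
    starMatrix m n w0 w (some ⟨i, j⟩) (some ⟨i', j'⟩) =
      if (i : ℕ) = (i' : ℕ) then
        if (j : ℕ) = (j' : ℕ) then w i (j : ℕ)
        else if (j : ℕ) + 1 = (j' : ℕ) ∨ (j' : ℕ) + 1 = (j : ℕ) then 1 else 0
      else 0 := rfl

lemma starMatrix_symm (u v : StarVertex m n) :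
    starMatrix m n w0 w u v = starMatrix m n w0 w v u := by
  rcases u with _ | ⟨i, j⟩ <;> rcases v with _ | ⟨i', j'⟩
  · rfl
  · rw [sm_ns, sm_sn]
  · rw [sm_sn, sm_ns]
  · rw [sm_ss, sm_ss]
    by_cases hii : (i : ℕ) = (i' : ℕ)
    · have hi : i = i' := Fin.ext hii
      subst hi
      rw [if_pos hii, if_pos hii.symm]
      by_cases hjj : (j : ℕ) = (j' : ℕ)
      · rw [if_pos hjj, if_pos hjj.symm, hjj]
      · rw [if_neg hjj, if_neg (Ne.symm hjj)]
        split_ifs with h1 h2 <;> first | rfl | (exfalso; tauto)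
    · rw [if_neg hii, if_neg (Ne.symm hii)]

end Entries

section WeightVector

/-- weight sequence for the dominance argument -/
noncomputable def gz (j : ℕ) : ℝ := (4 - (4:ℝ)⁻¹ ^ j) / 3

lemma gz_one_le (j : ℕ) : 1 ≤ gz j := by
  have h1 : (4:ℝ)⁻¹ ^ j ≤ 1 := pow_le_one₀ (by norm_num) (by norm_num)
  unfold gz; linarith

lemma gz_lt (j : ℕ) : gz j < 4/3 := by
  have h1 : (0:ℝ) < (4:ℝ)⁻¹ ^ j := by positivity
  unfold gz; linarith

lemma gz_pos (j : ℕ) : 0 < gz j := lt_of_lt_of_le one_pos (gz_one_le j)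

lemma gz_concave (j : ℕ) : gz j + gz (j+2) < 2 * gz (j+1) := by
  have h1 : (0:ℝ) < (4:ℝ)⁻¹ ^ j := by positivity
  unfold gz
  rw [pow_succ, pow_succ]
  nlinarith [h1]

/-- the positive weight vector on the vertices of the star -/
noncomputable def starZ (m : ℕ) (n : Fin m → ℕ) : StarVertex m n → ℝ :=
  fun v => Option.casesOn v (gz 0) fun s => gz ((s.2 : ℕ) + 1)

variable {m : ℕ} {n : Fin m → ℕ}

lemma starZ_none : starZ m n none = gz 0 := rfl

lemma starZ_some (i : Fin m) (j : Fin (n i)) :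
    starZ m n (some ⟨i, j⟩) = gz ((j : ℕ) + 1) := rfl

lemma starZ_pos (v : StarVertex m n) : 0 < starZ m n v := by
  rcases v with _ | ⟨i, j⟩
  · exact gz_pos 0
  · exact gz_pos _

end WeightVector

section SumHelpers

lemma sum_if_eq (K t : ℕ) (ht : t < K) (f : ℕ → ℝ) :
    ∑ j' ∈ range K, (if j' = t then f j' else 0) = f t := by
  rw [Finset.sum_ite_eq' (range K) t f, if_pos (mem_range.2 ht)]

lemma adj_sum (K j : ℕ) (f : ℕ → ℝ) :
    ∑ j' ∈ range K, (if j' + 1 = j ∨ j + 1 = j' then f j' else 0)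
      = (if 1 ≤ j ∧ j - 1 < K then f (j-1) else 0) + (if j + 1 < K then f (j+1) else 0) := by
  have hpt : ∀ j', (if j' + 1 = j ∨ j + 1 = j' then f j' else 0)
      = (if j' = j - 1 ∧ 1 ≤ j then f j' else 0) + (if j' = j + 1 then f j' else 0) := by
    intro j'
    split_ifs with h1 h2 h3 h4 h5 <;> first
      | (exfalso; omega)
      | ring
      | (obtain ⟨h2a, _⟩ := h2; rw [h2a]; ring)
      | (rw [h3]; ring)
      | (rw [h4]; ring)
  rw [Finset.sum_congr rfl fun j' _ => hpt j', Finset.sum_add_distrib]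
  congr 1
  · by_cases hj : 1 ≤ j
    · simp only [hj, and_true, true_and]
      rw [Finset.sum_ite_eq' (range K) (j-1) f]
      simp [Finset.mem_range]
    · simp [hj]
  · rw [Finset.sum_ite_eq' (range K) (j+1) f]
    by_cases hm : j + 1 < K
    · rw [if_pos (mem_range.2 hm), if_pos hm]
    · rw [if_neg (fun hc => hm (mem_range.1 hc)), if_neg hm]

lemma abs_cast_if01 (c : Prop) [Decidable c] :
    |(((if c then (1:ℤ) else 0) : ℤ) : ℝ)| = if c then (1:ℝ) else 0 := by
  split_ifs <;> norm_num

end SumHelpers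

section LegComputations

lemma leg_ineq (K k : ℕ) (a : ℤ) (ha : 3 ≤ a) (hK : K = k + 1) (j : ℕ) (hj : j < K) :
    (if j = 0 then (1:ℝ) else 0) + ((if 1 ≤ j ∧ j - 1 < K then gz j else 0)
        + (if j + 1 < K then gz (j+2) else 0))
      < -((chainW k a j : ℤ) : ℝ) * gz (j+1) := by
  have ha' : (3:ℝ) ≤ (a:ℝ) := by exact_mod_cast ha
  have hg1 := gz_one_le (j+1)
  have hgl := gz_lt j
  have hgz0 : gz 0 = 1 := by norm_num [gz]
  by_cases hjk : j < k
  · -- weight -2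
    have hcw : ((chainW k a j : ℤ) : ℝ) = -2 := by
      unfold chainW; rw [if_pos hjk]; norm_num
    rw [hcw]
    have hlt : j + 1 < K := by omega
    rw [if_pos hlt]
    rcases Nat.eq_zero_or_pos j with hj0 | hj0
    · subst hj0
      rw [if_pos rfl, if_neg (show ¬(1 ≤ 0 ∧ 0 - 1 < K) by omega)]
      have := gz_concave 0
      rw [hgz0] at this
      norm_num
      linarith
    · rw [if_neg (show ¬(j = 0) by omega), if_pos (show 1 ≤ j ∧ j - 1 < K by omega)]
      have := gz_concave j
      have hj1 : j - 1 + 1 = j := by omega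
      norm_num
      linarith
  · -- terminal vertex, weight -a
    have hjke : j = k := by omega
    have hcw : ((chainW k a j : ℤ) : ℝ) = -(a:ℝ) := by
      unfold chainW; rw [if_neg hjk]; push_cast; ring
    rw [hcw]
    rw [if_neg (show ¬(j + 1 < K) by omega)]
    rcases Nat.eq_zero_or_pos j with hj0 | hj0
    · subst hj0
      rw [if_pos rfl, if_neg (show ¬(1 ≤ 0 ∧ 0 - 1 < K) by omega)]
      nlinarith
    · rw [if_neg (show ¬(j = 0) by omega), if_pos (show 1 ≤ j ∧ j - 1 < K by omega)]
      have := gz_lt j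
      nlinarith

lemma leg_sum (K k : ℕ) (a : ℤ) (j : ℕ) (hj : j < K) :
    ∑ j' ∈ range K, |(((if j' = j then chainW k a j'
        else if j' + 1 = j ∨ j + 1 = j' then 1 else 0) : ℤ) : ℝ)| * gz (j' + 1)
      = |((chainW k a j : ℤ) : ℝ)| * gz (j + 1)
        + ((if 1 ≤ j ∧ j - 1 < K then gz j else 0) + (if j + 1 < K then gz (j + 2) else 0)) := by
  have hpt : ∀ j', |(((if j' = j then chainW k a j'
        else if j' + 1 = j ∨ j + 1 = j' then 1 else 0) : ℤ) : ℝ)| * gz (j' + 1)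
      = (if j' = j then |((chainW k a j' : ℤ) : ℝ)| * gz (j' + 1) else 0)
        + (if j' + 1 = j ∨ j + 1 = j' then gz (j' + 1) else 0) := by
    intro j'
    by_cases h1 : j' = j
    · rw [if_pos h1, if_pos h1, if_neg (by omega)]
      ring
    · rw [if_neg h1, if_neg h1]
      by_cases h2 : j' + 1 = j ∨ j + 1 = j'
      · rw [if_pos h2, if_pos h2]; norm_num
      · rw [if_neg h2, if_neg h2]; norm_num
  rw [Finset.sum_congr rfl fun j' _ => hpt j', Finset.sum_add_distrib]
  congr 1
  · exact sum_if_eq K j hj _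
  · rw [adj_sum K j (fun t => gz (t + 1))]
    congr 1
    by_cases hb : 1 ≤ j ∧ j - 1 < K
    · rw [if_pos hb, if_pos hb]
      congr 1
      omega
    · rw [if_neg hb, if_neg hb]

lemma leg_sum_central (K : ℕ) (hK : 0 < K) :
    ∑ j' ∈ range K, (if j' = 0 then (1:ℝ) else 0) * gz (j' + 1) = gz 1 := by
  have hpt : ∀ j', (if j' = 0 then (1:ℝ) else 0) * gz (j' + 1)
      = if j' = 0 then gz (j' + 1) else 0 := by
    intro j'; split_ifs <;> ring
  rw [Finset.sum_congr rfl fun j' _ => hpt j']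
  exact sum_if_eq K 0 hK (fun t => gz (t + 1))

end LegComputations

section Dominance

lemma sigma_sum (m : ℕ) (n : Fin m → ℕ) (F : ((i : Fin m) × Fin (n i)) → ℝ) :
    ∑ s : (i : Fin m) × Fin (n i), F s = ∑ i, ∑ j, F ⟨i, j⟩ :=
  Finset.sum_sigma _ _ _

lemma dom_none (n : Fin 3 → ℕ) (hn : ∀ i, 0 < n i) (w : Fin 3 → ℕ → ℤ) :
    ∑ u ∈ Finset.univ.erase (none : StarVertex 3 n),
        |((starMatrix 3 n (-4) w u none : ℤ) : ℝ)| * starZ 3 n u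
      < -((starMatrix 3 n (-4) w none none : ℤ) : ℝ) * starZ 3 n none := by
  rw [Finset.sum_erase_eq_sub (Finset.mem_univ _), Fintype.sum_option, sigma_sum]
  have hleg : ∀ i : Fin 3, ∑ j : Fin (n i),
      |((starMatrix 3 n (-4) w (some ⟨i, j⟩) none : ℤ) : ℝ)| * starZ 3 n (some ⟨i, j⟩)
      = gz 1 := by
    intro i
    have hconv : ∀ j : Fin (n i),
        |((starMatrix 3 n (-4) w (some ⟨i, j⟩) none : ℤ) : ℝ)| * starZ 3 n (some ⟨i, j⟩)
        = (if (j : ℕ) = 0 then (1:ℝ) else 0) * gz ((j : ℕ) + 1) := by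
      intro j
      rw [sm_sn, starZ_some, abs_cast_if01]
    rw [Finset.sum_congr rfl fun j _ => hconv j]
    rw [Fin.sum_univ_eq_sum_range (fun t => (if t = 0 then (1:ℝ) else 0) * gz (t + 1)) (n i)]
    exact leg_sum_central (n i) (hn i)
  rw [Fin.sum_univ_three]
  rw [hleg 0, hleg 1, hleg 2, sm_nn, starZ_none]
  have h0 : gz 0 = 1 := by norm_num [gz]
  have h1 : gz 1 = 5/4 := by norm_num [gz]
  rw [h0, h1]
  norm_num

lemma dom_some (m : ℕ) (n : Fin m → ℕ) (w0 : ℤ) (w : Fin m → ℕ → ℤ)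
    (i : Fin m) (k : ℕ) (a : ℤ) (ha : 3 ≤ a) (hn : n i = k + 1)
    (hw : ∀ t, w i t = chainW k a t) (j : Fin (n i)) :
    ∑ u ∈ Finset.univ.erase (some ⟨i, j⟩ : StarVertex m n),
        |((starMatrix m n w0 w u (some ⟨i, j⟩) : ℤ) : ℝ)| * starZ m n u
      < -((starMatrix m n w0 w (some ⟨i, j⟩) (some ⟨i, j⟩) : ℤ) : ℝ)
          * starZ m n (some ⟨i, j⟩) := by
  rw [Finset.sum_erase_eq_sub (Finset.mem_univ _), Fintype.sum_option, sigma_sum]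
  -- the inner double sum reduces to the sum over the leg `i`
  have hzero : ∀ i' : Fin m, i' ≠ i → (∑ j' : Fin (n i'),
      |((starMatrix m n w0 w (some ⟨i', j'⟩) (some ⟨i, j⟩) : ℤ) : ℝ)|
        * starZ m n (some ⟨i', j'⟩)) = 0 := by
    intro i' hi'
    refine Finset.sum_eq_zero fun j' _ => ?_
    rw [sm_ss, if_neg (fun hc => hi' (Fin.ext hc))]
    norm_num
  have hmain : ∑ i' : Fin m, (∑ j' : Fin (n i'),
      |((starMatrix m n w0 w (some ⟨i', j'⟩) (some ⟨i, j⟩) : ℤ) : ℝ)|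
        * starZ m n (some ⟨i', j'⟩))
      = ∑ j' : Fin (n i),
        |((starMatrix m n w0 w (some ⟨i, j'⟩) (some ⟨i, j⟩) : ℤ) : ℝ)|
          * starZ m n (some ⟨i, j'⟩) :=
    Finset.sum_eq_single i (fun i' _ hi' => hzero i' hi') (fun h => absurd (Finset.mem_univ i) h)
  rw [hmain]
  -- convert the leg sum to a `range` sum
  have hconv : ∀ j' : Fin (n i),
      |((starMatrix m n w0 w (some ⟨i, j'⟩) (some ⟨i, j⟩) : ℤ) : ℝ)|
        * starZ m n (some ⟨i, j'⟩)
      = |(((if (j' : ℕ) = (j : ℕ) then chainW k a (j' : ℕ)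
          else if (j' : ℕ) + 1 = (j : ℕ) ∨ (j : ℕ) + 1 = (j' : ℕ) then 1 else 0) : ℤ) : ℝ)|
          * gz ((j' : ℕ) + 1) := by
    intro j'
    rw [sm_ss, if_pos rfl, starZ_some, hw]
  rw [Finset.sum_congr rfl fun j' _ => hconv j']
  rw [Fin.sum_univ_eq_sum_range (fun t => |(((if t = (j : ℕ) then chainW k a t
      else if t + 1 = (j : ℕ) ∨ (j : ℕ) + 1 = t then 1 else 0) : ℤ) : ℝ)| * gz (t + 1)) (n i)]
  rw [leg_sum (n i) k a (j : ℕ) j.isLt]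
  -- the diagonal entry
  have hdiag : starMatrix m n w0 w (some ⟨i, j⟩) (some ⟨i, j⟩) = chainW k a (j : ℕ) := by
    rw [sm_ss, if_pos rfl, if_pos rfl, hw]
  rw [hdiag, sm_ns, starZ_none, starZ_some, abs_cast_if01]
  have h0 : gz 0 = 1 := by norm_num [gz]
  have key := leg_ineq (n i) k a ha hn (j : ℕ) j.isLt
  rw [h0]
  have hone : (if (j : ℕ) = 0 then (1:ℝ) else 0) * 1 = (if (j : ℕ) = 0 then (1:ℝ) else 0) := by
    ring
  rw [hone]
  linarith [key]

end Dominance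

/-- The intersection matrix of the star-shaped weighted tree `Γ_{p,q,r}` (central vertex of
weight `-4`; legs: `q` vertices of weight `-2` then `-(p+3)`; `r` vertices of weight `-2`
then `-(q+3)`; `p` vertices of weight `-2` then `-(r+3)`) is negative definite. -/
theorem Gamma_pqr_negative_definite (p q r : ℕ) :
    ∀ x : StarVertex 3 ![q + 1, r + 1, p + 1] → ℝ, x ≠ 0 →
      ∑ v, ∑ v', ((starMatrix 3 ![q + 1, r + 1, p + 1] (-4)
          ![chainW q ((p : ℤ) + 3), chainW r ((q : ℤ) + 3), chainW p ((r : ℤ) + 3)] v v' : ℤ) : ℝ)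
          * x v * x v' < 0 := by
  intro x hx
  refine negdef_of_dom
    (fun v u => ((starMatrix 3 ![q + 1, r + 1, p + 1] (-4)
      ![chainW q ((p : ℤ) + 3), chainW r ((q : ℤ) + 3), chainW p ((r : ℤ) + 3)] v u : ℤ) : ℝ))
    (fun u v => congrArg _ (starMatrix_symm u v))
    (starZ 3 ![q + 1, r + 1, p + 1]) (starZ_pos) ?_ x hx
  rintro (_ | ⟨i, j⟩)
  · exact dom_none _ (fun i => by fin_cases i <;> simp) _
  · fin_cases i
    · exact dom_some _ _ _ _ _ q ((p : ℤ) + 3) (by omega) (by simp) (fun t => rfl) j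
    · exact dom_some _ _ _ _ _ r ((q : ℤ) + 3) (by omega) (by simp) (fun t => rfl) j
    · exact dom_some _ _ _ _ _ p ((r : ℤ) + 3) (by omega) (by simp) (fun t => rfl) j
end

section
/- For all natural numbers p ≥ 1 and q, r ≥ 0, the intersection matrix of the star-shaped weighted tree Δ_{p,q,r} — which has a central vertex of weight −3 and three legs attached to it: a leg consisting of a single vertex of weight −(p+2); a chain of r vertices of weight −2 followed by a terminal vertex of weight −(q+4); and a leg which is a path whose vertices, listed in order starting from the one adjacent to the central vertex, have weights −2 (repeated q times), −3, −2 (repeated p−1 times), −(r+3) — is negative definite. -/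
/-!
Weighted diagonal dominance: if a symmetric matrix `Q` with nonnegative off-diagonal entries
admits a positive vector `d` with `Q d < 0` entrywise, then
`2 xᵥ x_w ≤ (d_w / dᵥ) xᵥ² + (dᵥ / d_w) x_w²` gives `xᵀ Q x ≤ ∑ᵥ (xᵥ² / dᵥ) (Q d)ᵥ < 0`.
For a star-shaped tree whose leg weights are all `≤ -2`, take `d = 1` at the centre and, along a
leg of `n` vertices, the concave quadratic `d_j = c (n² - j²)`: its second differences are `-2c`,
it vanishes one step past the end of the leg, and for `1 / (n² + 1) < c < 1 / n²` the row of the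
first vertex of the leg is negative while the leg adds less than `1` to the row of the centre.
So `m` legs and a centre of weight `≤ -m` suffice; `Δ_{p,q,r}` has three legs, centre weight `-3`
and all leg weights `≤ -2`.
-/

open Matrix Finset

theorem quadForm_neg_of_mulVec_neg {ι : Type*} [Fintype ι] {Q : Matrix ι ι ℝ} (hQ : Q.IsSymm)
    (hoff : ∀ v w, v ≠ w → 0 ≤ Q v w) {d : ι → ℝ} (hd : ∀ v, 0 < d v)
    (hQd : ∀ v, (Q *ᵥ d) v < 0) (x : ι → ℝ) (hx : x ≠ 0) :
    ∑ v, ∑ w, Q v w * x v * x w < 0 := by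
  have amgm : ∀ v w,
      Q v w * x v * x w ≤ Q v w * (d w / d v * x v ^ 2 + d v / d w * x w ^ 2) / 2 := by
    intro v w
    by_cases hvw : v = w
    · subst hvw
      exact le_of_eq (by rw [div_self (hd v).ne']; ring)
    · have hsq : d w / d v * x v ^ 2 + d v / d w * x w ^ 2 - 2 * (x v * x w)
          = (d w * x v - d v * x w) ^ 2 / (d v * d w) := by
        field_simp [(hd v).ne', (hd w).ne']
        ring
      have : 0 ≤ (d w * x v - d v * x w) ^ 2 / (d v * d w) :=
        div_nonneg (sq_nonneg _) (mul_pos (hd v) (hd w)).le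
      nlinarith [hoff v w hvw]
  have halves : ∑ v, ∑ w, Q v w * (d v / d w * x w ^ 2)
      = ∑ v, ∑ w, Q v w * (d w / d v * x v ^ 2) := by
    rw [sum_comm]
    exact sum_congr rfl fun w _ => sum_congr rfl fun v _ => by rw [hQ.apply]
  calc ∑ v, ∑ w, Q v w * x v * x w
      ≤ ∑ v, ∑ w, Q v w * (d w / d v * x v ^ 2 + d v / d w * x w ^ 2) / 2 :=
        sum_le_sum fun v _ => sum_le_sum fun w _ => amgm v w
    _ = (∑ v, ∑ w, Q v w * (d w / d v * x v ^ 2)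
          + ∑ v, ∑ w, Q v w * (d v / d w * x w ^ 2)) / 2 := by
        simp_rw [← sum_div, mul_add, sum_add_distrib]
    _ = ∑ v, x v ^ 2 / d v * (Q *ᵥ d) v := by
        rw [halves, add_self_div_two]
        simp only [mulVec, dotProduct, mul_sum]
        exact sum_congr rfl fun v _ => sum_congr rfl fun w _ => by ring
    _ < 0 := by
        obtain ⟨v, hv⟩ := Function.ne_iff.mp hx
        refine sum_neg' (fun v _ => ?_) ⟨v, mem_univ v, ?_⟩
        · exact mul_nonpos_of_nonneg_of_nonpos (div_nonneg (sq_nonneg _) (hd v).le) (hQd v).le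
        · exact mul_neg_of_pos_of_neg (div_pos (sq_pos_of_ne_zero hv) (hd v)) (hQd v)

theorem sum_fin_ite_val_eq {M : Type*} [AddCommMonoid M] (N a : ℕ) (g : ℕ → M) :
    ∑ j : Fin N, (if (j : ℕ) = a then g j else 0) = if a < N then g a else 0 := by
  rw [Fin.sum_univ_eq_sum_range (fun k => if k = a then g k else 0), sum_ite_eq' (range N)]
  simp

def starVec {m : ℕ} {n : Fin m → ℕ} (c : ℝ) (f : Fin m → ℕ → ℝ) : StarVertex m n → ℝ
  | none => c
  | some ⟨i, j⟩ => f i j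

namespace starMatrix

variable {m : ℕ} {n : Fin m → ℕ} (w0 : ℤ) (w : Fin m → ℕ → ℤ)

theorem isSymm : (starMatrix m n w0 w).IsSymm := by
  refine IsSymm.ext fun v v' => ?_
  rcases v with _ | ⟨i, j⟩ <;> rcases v' with _ | ⟨i', j'⟩
  · rfl
  · rfl
  · rfl
  · simp only [starMatrix, of_apply, eq_comm (a := (i : ℕ)), eq_comm (a := (j : ℕ)), or_comm]
    split_ifs with hi hj <;>
      first | rfl | (cases Fin.val_injective hi; cases Fin.val_injective hj; rfl)

theorem nonneg_of_ne {v v' : StarVertex m n} (h : v ≠ v') : 0 ≤ starMatrix m n w0 w v v' := by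
  rcases v with _ | ⟨i, j⟩ <;> rcases v' with _ | ⟨i', j'⟩
  · exact absurd rfl h
  · simp only [starMatrix, of_apply]; split_ifs <;> simp
  · simp only [starMatrix, of_apply]; split_ifs <;> simp
  · simp only [starMatrix, of_apply]
    split_ifs with hi hj
    · cases Fin.val_injective hi; cases Fin.val_injective hj; exact (h rfl).elim
    all_goals simp

theorem mulVec_starVec_none (c : ℝ) (f : Fin m → ℕ → ℝ) :
    ((starMatrix m n w0 w).map ((↑) : ℤ → ℝ) *ᵥ starVec c f) none
      = w0 * c + ∑ i, if 0 < n i then f i 0 else 0 := by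
  simp only [mulVec, dotProduct, Fintype.sum_option, ← univ_sigma_univ, sum_sigma, map_apply,
    starMatrix, of_apply, starVec]
  congr 1
  refine sum_congr rfl fun i _ => ?_
  rw [← sum_fin_ite_val_eq]
  refine sum_congr rfl fun j _ => ?_
  split_ifs <;> simp_all

theorem mulVec_starVec_some (c : ℝ) (f : Fin m → ℕ → ℝ) (i : Fin m) (j : Fin (n i)) :
    ((starMatrix m n w0 w).map ((↑) : ℤ → ℝ) *ᵥ starVec c f) (some ⟨i, j⟩)
      = (if (j : ℕ) = 0 then c else f i (j - 1)) + w i j * f i j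
        + (if (j : ℕ) + 1 < n i then f i (j + 1) else 0) := by
  simp only [mulVec, dotProduct, Fintype.sum_option, ← univ_sigma_univ, sum_sigma, map_apply,
    starMatrix, of_apply, starVec]
  rw [sum_eq_single i (fun i' _ hi' => sum_eq_zero fun j' _ => by
    rw [if_neg (fun h => hi' (Fin.val_injective h).symm), Int.cast_zero, zero_mul])
    (fun h => (h (mem_univ i)).elim)]
  simp only [if_true]
  have neighbours : ∀ j' : Fin (n i), ((if (j : ℕ) = j' then w i j
      else if (j : ℕ) + 1 = j' ∨ (j' : ℕ) + 1 = j then 1 else 0 : ℤ) : ℝ) * f i j'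
      = (if (j' : ℕ) = j then w i j * f i j' else 0) + (if (j' : ℕ) = j + 1 then f i j' else 0)
        + (if (j' : ℕ) + 1 = j then f i j' else 0) := by
    intro j'
    split_ifs <;> first | omega | simp_all
  have prev : ∑ j' : Fin (n i), (if (j' : ℕ) + 1 = j then f i j' else 0)
      = if (j : ℕ) = 0 then 0 else f i (j - 1) := by
    split_ifs with hj
    · exact sum_eq_zero fun j' _ => if_neg (by omega)
    · rw [← if_pos (show (j : ℕ) - 1 < n i by omega) (t := f i (j - 1)) (e := 0),
        ← sum_fin_ite_val_eq]
      exact sum_congr rfl fun j' _ => if_congr (by omega) rfl rfl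
  rw [sum_congr rfl fun j' _ => neighbours j', sum_add_distrib, sum_add_distrib,
    sum_fin_ite_val_eq (n i) j (fun k => w i j * f i k), sum_fin_ite_val_eq (n i) (j + 1) (f i),
    prev, if_pos j.isLt]
  split_ifs <;> simp only [Int.cast_one, Int.cast_zero] <;> ring

end starMatrix

theorem leg_row_neg {f : ℕ → ℝ} {c c0 w : ℝ} {N j : ℕ}
    (hf : ∀ k, f k = c * ((N : ℝ) ^ 2 - (k : ℝ) ^ 2)) (hc : 0 < c)
    (hc0 : c0 < c * ((N : ℝ) ^ 2 + 1)) (hw : w ≤ -2) (hj : j < N) :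
    (if j = 0 then c0 else f (j - 1)) + w * f j + (if j + 1 < N then f (j + 1) else 0) < 0 := by
  have hnext : (if j + 1 < N then f (j + 1) else 0) = f (j + 1) := by
    split_ifs with h
    · rfl
    · rw [hf, show j + 1 = N by omega, sub_self, mul_zero]
  have hfj : 0 ≤ f j := by
    have : (j : ℝ) < N := by exact_mod_cast hj
    rw [hf]
    exact mul_nonneg hc.le (by nlinarith [j.cast_nonneg (α := ℝ)])
  have hwf : w * f j ≤ -2 * f j := mul_le_mul_of_nonneg_right hw hfj
  rw [hnext]
  rcases j with _ | k
  · simp only [if_true, hf] at hwf ⊢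
    push_cast at hwf ⊢
    nlinarith
  · simp only [Nat.add_one_ne_zero, if_false, Nat.add_sub_cancel, hf] at hwf ⊢
    push_cast at hwf ⊢
    nlinarith

theorem starMatrix_quadForm_neg {m : ℕ} {n : Fin m → ℕ} {w0 : ℤ} {w : Fin m → ℕ → ℤ}
    (hm : 0 < m) (hw0 : w0 ≤ -m) (hw : ∀ i, ∀ j < n i, w i j ≤ -2)
    (x : StarVertex m n → ℝ) (hx : x ≠ 0) :
    ∑ v, ∑ v', ((starMatrix m n w0 w v v' : ℤ) : ℝ) * x v * x v' < 0 := by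
  set c : Fin m → ℝ := fun i => 2 / (2 * (n i : ℝ) ^ 2 + 1)
  set f : Fin m → ℕ → ℝ := fun i j => c i * ((n i : ℝ) ^ 2 - (j : ℝ) ^ 2)
  have hc : ∀ i, 0 < c i := fun i => by positivity
  have hc0 : ∀ i, 1 < c i * ((n i : ℝ) ^ 2 + 1) := fun i => by
    rw [div_mul_eq_mul_div, one_lt_div (by positivity)]
    linarith
  have hf0 : ∀ i, f i 0 < 1 := fun i => by
    simp only [f, c, Nat.cast_zero, zero_pow two_ne_zero, sub_zero]
    rw [div_mul_eq_mul_div, div_lt_one (by positivity)]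
    linarith
  refine quadForm_neg_of_mulVec_neg ((starMatrix.isSymm w0 w).map ((↑) : ℤ → ℝ))
    (fun v v' h => Int.cast_nonneg (starMatrix.nonneg_of_ne w0 w h)) (d := starVec 1 f) ?_ ?_
    x hx
  · rintro (_ | ⟨i, j⟩)
    · exact one_pos
    · have : (j : ℝ) < n i := by exact_mod_cast j.isLt
      exact mul_pos (hc i) (by nlinarith [(j : ℕ).cast_nonneg (α := ℝ)])
  · rintro (_ | ⟨i, j⟩)
    · have legs : ∑ i, (if 0 < n i then f i 0 else 0) < m := by
        simpa using sum_lt_sum_of_nonempty (s := univ) (g := fun _ => (1 : ℝ))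
          ⟨⟨0, hm⟩, mem_univ _⟩ fun i _ => show (if 0 < n i then f i 0 else 0) < 1 by
            split_ifs; exacts [hf0 i, one_pos]
      have : (w0 : ℝ) ≤ -m := by exact_mod_cast hw0
      rw [starMatrix.mulVec_starVec_none]
      linarith
    · rw [starMatrix.mulVec_starVec_some]
      exact leg_row_neg (fun k => rfl) (hc i) (hc0 i) (by exact_mod_cast hw i j j.isLt) j.isLt

theorem Delta_pqr_negative_definite_general (p q r : ℕ) :
    ∀ x : StarVertex 3 ![1, r + 1, q + p + 1] → ℝ, x ≠ 0 →
      ∑ v, ∑ v', ((starMatrix 3 ![1, r + 1, q + p + 1] (-3)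
          ![fun _ => -((p : ℤ) + 2),
            chainW r ((q : ℤ) + 4),
            fun j => if j < q then -2 else if j = q then -3 else
              if j < q + p then -2 else -((r : ℤ) + 3)] v v' : ℤ) : ℝ)
          * x v * x v' < 0 :=
  starMatrix_quadForm_neg (by norm_num) (by norm_num) fun i j _ => by
    fin_cases i
    · show -((p : ℤ) + 2) ≤ -2
      omega
    · show chainW r ((q : ℤ) + 4) j ≤ -2
      unfold chainW
      split_ifs <;> omega
    · show (if j < q then -2 else if j = q then -3 else
        if j < q + p then -2 else -((r : ℤ) + 3)) ≤ -2
      split_ifs <;> omega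

/-- The intersection matrix of the star-shaped weighted tree `Δ_{p,q,r}` for `p ≥ 1` (central
vertex of weight `-3`; legs: a single vertex of weight `-(p+2)`; `r` vertices of weight `-2`
then `-(q+4)`; and a path with weights `-2` (`q` times), `-3`, `-2` (`p-1` times), `-(r+3)`)
is negative definite. -/
theorem Delta_pqr_negative_definite (p q r : ℕ) (hp : 1 ≤ p) :
    ∀ x : StarVertex 3 ![1, r + 1, q + p + 1] → ℝ, x ≠ 0 →
      ∑ v, ∑ v', ((starMatrix 3 ![1, r + 1, q + p + 1] (-3)
          ![fun _ => -((p : ℤ) + 2),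
            chainW r ((q : ℤ) + 4),
            fun j => if j < q then -2 else if j = q then -3 else
              if j < q + p then -2 else -((r : ℤ) + 3)] v v' : ℤ) : ℝ)
          * x v * x v' < 0 :=
  Delta_pqr_negative_definite_general p q r
end

section
/- For all natural numbers p ≥ 1 and q ≥ 0, the intersection matrix of the star-shaped weighted tree Λ_{p,q,0} — which has a central vertex of weight −2 and three legs attached to it: a leg consisting of a single vertex of weight −(p+2); a leg consisting of a single vertex of weight −3; and a leg which is a path whose vertices, listed in order starting from the one adjacent to the central vertex, have weights −2 (repeated q times), −4, −2 (repeated p−1 times), −(q+4) — is negative definite. -/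
namespace Lpq0

def wfun (p q : ℕ) : Fin 3 → ℕ → ℤ :=
  ![fun _ => -((p : ℤ) + 2), fun _ => -3,
    fun j => if j < q then -2 else if j = q then -4 else
      if j < q + p then -2 else -((q : ℤ) + 4)]

abbrev QM (p q : ℕ) : Matrix (StarVertex 3 ![1,1,q+p+1]) (StarVertex 3 ![1,1,q+p+1]) ℤ :=
  starMatrix 3 ![1,1,q+p+1] (-2) (wfun p q)

def Wc (p q t : ℕ) : ℤ := if t < q then -2 else if t = q then -4 else
      if t < q + p then -2 else -((q : ℤ) + 4)

def MM (p q : ℕ) : ℤ := ((q:ℤ) + p + 2)^2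

def DD (p q : ℕ) (t : ℕ) : ℤ :=
  if t ≤ q then 2*(MM p q - ((t:ℤ)+1)^2) else 2*(MM p q - ((q:ℤ)+1)^2 - ((t:ℤ)-(q:ℤ))^2)

def dv (p q : ℕ) : StarVertex 3 ![1,1,q+p+1] → ℤ
  | none => 2 * MM p q
  | some ⟨i, j⟩ => if (i:ℕ) = 2 then DD p q (j:ℕ) else MM p q

lemma MM_pos (p q : ℕ) : 0 < MM p q := by
  have h1 : (0:ℤ) < (q:ℤ) + p + 2 := by positivity
  exact pow_pos h1 2

lemma DD_ge (p q t : ℕ) (ht : q ≤ t) :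
    DD p q t = 2*(MM p q - ((q:ℤ)+1)^2 - ((t:ℤ)-(q:ℤ))^2) := by
  rcases eq_or_lt_of_le ht with h | h
  · subst h; simp [DD]
  · have h2 : ¬ t ≤ q := by omega
    simp [DD, h2]

lemma DD_pos (p q t : ℕ) (ht : t ≤ q + p) : 0 < DD p q t := by
  have hq : (0:ℤ) ≤ (q:ℤ) := Int.natCast_nonneg q
  have hp : (0:ℤ) ≤ (p:ℤ) := Int.natCast_nonneg p
  by_cases h : t ≤ q
  · have h1 : (t:ℤ) ≤ (q:ℤ) := by exact_mod_cast h
    have h0 : (0:ℤ) ≤ (t:ℤ) := Int.natCast_nonneg t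
    simp only [DD, if_pos h, MM]
    nlinarith [mul_nonneg hq hp]
  · have h1 : (q:ℤ) < (t:ℤ) := by exact_mod_cast Nat.lt_of_not_le h
    have h2 : (t:ℤ) ≤ (q:ℤ) + (p:ℤ) := by exact_mod_cast ht
    simp only [DD, if_neg h, MM]
    nlinarith [mul_nonneg hq hp, mul_nonneg hq (sub_nonneg.2 h1.le)]

lemma dv_pos (p q : ℕ) (v : StarVertex 3 ![1,1,q+p+1]) : 0 < dv p q v := by
  rcases v with _ | ⟨i, j⟩
  · simpa [dv] using by nlinarith [MM_pos p q]
  · simp only [dv]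
    by_cases h : (i:ℕ) = 2
    · rw [if_pos h]
      have : i = (2 : Fin 3) := Fin.ext (by rw [h]; rfl)
      subst this
      have hj : (j:ℕ) < q + p + 1 := j.isLt
      exact DD_pos p q _ (by omega)
    · rw [if_neg h]; exact MM_pos p q

/-! ### entry lemmas (all `rfl`) -/

lemma QM_none_none (p q : ℕ) : QM p q none none = -2 := rfl
lemma QM_none_some (p q : ℕ) (i : Fin 3) (j) :
    QM p q none (some ⟨i, j⟩) = if (j:ℕ) = 0 then 1 else 0 := rfl
lemma QM_some_none (p q : ℕ) (i : Fin 3) (j) :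
    QM p q (some ⟨i, j⟩) none = if (j:ℕ) = 0 then 1 else 0 := rfl
lemma QM_some_some (p q : ℕ) (i i' : Fin 3) (j j') :
    QM p q (some ⟨i, j⟩) (some ⟨i', j'⟩) =
    if (i : ℕ) = (i' : ℕ) then
      if (j : ℕ) = (j' : ℕ) then wfun p q i (j : ℕ)
      else if (j : ℕ) + 1 = (j' : ℕ) ∨ (j' : ℕ) + 1 = (j : ℕ) then 1 else 0
    else 0 := rfl

/-! ### generic sum lemmas -/

lemma fin_sum_ite' (n k : ℕ) (g : ℕ → ℤ) :
    (∑ j : Fin n, if (j:ℕ) = k then g (j:ℕ) else 0) = if k < n then g k else 0 := by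
  by_cases hk : k < n
  · rw [if_pos hk, Finset.sum_eq_single (⟨k, hk⟩ : Fin n)]
    · simp
    · intro b _ hb
      rw [if_neg]
      intro hbv; exact hb (Fin.ext hbv)
    · intro h; exact absurd (Finset.mem_univ _) h
  · rw [if_neg hk]
    apply Finset.sum_eq_zero
    intro j _
    rw [if_neg]
    have := j.isLt
    omega

lemma sum_V (n : ℕ) (f : StarVertex 3 ![1,1,n] → ℤ) :
    ∑ v, f v = f none + f (some ⟨0, (0 : Fin 1)⟩) + f (some ⟨1, (0 : Fin 1)⟩)
      + ∑ j : Fin n, f (some ⟨2, j⟩) := by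
  rw [Fintype.sum_option, ← Finset.univ_sigma_univ, Finset.sum_sigma, Fin.sum_univ_three]
  have h0 : ∑ j : Fin (![1,1,n] 0), f (some ⟨0, j⟩) = f (some ⟨0, (0:Fin 1)⟩) :=
    Fin.sum_univ_one _
  have h1 : ∑ j : Fin (![1,1,n] 1), f (some ⟨1, j⟩) = f (some ⟨1, (0:Fin 1)⟩) :=
    Fin.sum_univ_one _
  rw [h0, h1, ← add_assoc, ← add_assoc]
  rfl

/-! ### symmetry and nonnegativity off the diagonal -/

lemma QM_symm (p q : ℕ) (v v' : StarVertex 3 ![1,1,q+p+1]) : QM p q v v' = QM p q v' v := by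
  rcases v with _ | ⟨i, j⟩ <;> rcases v' with _ | ⟨i', j'⟩
  · rfl
  · rfl
  · rfl
  · rw [QM_some_some, QM_some_some]
    by_cases hi : (i:ℕ) = (i':ℕ)
    · have hii : i = i' := Fin.ext hi
      subst hii
      by_cases hj : (j:ℕ) = (j':ℕ)
      · have hjj : j = j' := Fin.ext hj
        subst hjj
        rfl
      · have hj' : ¬ (j':ℕ) = (j:ℕ) := fun hh => hj hh.symm
        rw [if_pos hi, if_pos hi.symm, if_neg hj, if_neg hj']
        exact if_congr or_comm rfl rfl
    · have hi' : ¬ (i':ℕ) = (i:ℕ) := fun hh => hi hh.symm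
      rw [if_neg hi, if_neg hi']

lemma QM_offdiag_nonneg (p q : ℕ) (v v' : StarVertex 3 ![1,1,q+p+1]) (h : v ≠ v') :
    0 ≤ QM p q v v' := by
  rcases v with _ | ⟨i, j⟩ <;> rcases v' with _ | ⟨i', j'⟩
  · exact absurd rfl h
  · rw [QM_none_some]; split_ifs <;> norm_num
  · rw [QM_some_none]; split_ifs <;> norm_num
  · rw [QM_some_some]
    by_cases hi : (i:ℕ) = (i':ℕ)
    · by_cases hj : (j:ℕ) = (j':ℕ)
      · exfalso
        apply h
        have hii : i = i' := Fin.ext hi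
        subst hii
        have hjj : j = j' := Fin.ext hj
        subst hjj
        rfl
      · rw [if_pos hi, if_neg hj]; split_ifs <;> norm_num
    · rw [if_neg hi]

/-! ### arithmetic facts about the weights -/

lemma arith_none (p q : ℕ) :
    -2 * (2 * MM p q) + MM p q + MM p q + DD p q 0 < 0 := by
  have e0 : DD p q 0 = 2*(MM p q - 1) := by
    unfold DD; rw [if_pos (Nat.zero_le q)]; norm_num
  rw [e0]; linarith [MM_pos p q]

lemma arith_a (p q : ℕ) (hp : 1 ≤ p) :
    1 * (2 * MM p q) + (-((p:ℤ)+2)) * MM p q < 0 := by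
  have hp' : (1:ℤ) ≤ (p:ℤ) := by exact_mod_cast hp
  nlinarith [MM_pos p q]

lemma arith_b (p q : ℕ) : 1 * (2 * MM p q) + (-3) * MM p q < 0 := by
  nlinarith [MM_pos p q]

lemma arith_c0 (p q : ℕ) (hp : 1 ≤ p) :
    1 * (2 * MM p q) + (Wc p q 0 * DD p q 0 + DD p q 1) < 0 := by
  have hq : (0:ℤ) ≤ (q:ℤ) := Int.natCast_nonneg q
  have hp' : (1:ℤ) ≤ (p:ℤ) := by exact_mod_cast hp
  have e0 : DD p q 0 = 2*(MM p q - 1) := by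
    unfold DD; rw [if_pos (Nat.zero_le q)]; norm_num
  rcases Nat.eq_zero_or_pos q with hq0 | hq0
  · subst hq0
    have e1 : DD p 0 1 = 2*(MM p 0 - 1 - 1) := by
      rw [DD_ge p 0 1 (by omega)]; norm_num
    have w0 : Wc p 0 0 = -4 := by simp [Wc]
    rw [e0, e1, w0]
    have hM : (9:ℤ) ≤ MM p 0 := by
      unfold MM; push_cast; nlinarith
    linarith
  · have e1 : DD p q 1 = 2*(MM p q - 4) := by
      unfold DD; rw [if_pos (show (1:ℕ) ≤ q by omega)]; norm_num
    have w0 : Wc p q 0 = -2 := by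
      unfold Wc; rw [if_pos (show (0:ℕ) < q by omega)]
    rw [e0, e1, w0]
    linarith

lemma arith_chain (p q k : ℕ) (hp : 1 ≤ p) (hk : k + 1 < q + p + 1) :
    Wc p q (k+1) * DD p q (k+1)
      + (if k + 2 < q + p + 1 then DD p q (k+2) else 0) + DD p q k < 0 := by
  have hq : (0:ℤ) ≤ (q:ℤ) := Int.natCast_nonneg q
  have hp' : (1:ℤ) ≤ (p:ℤ) := by exact_mod_cast hp
  have hkc : (0:ℤ) ≤ (k:ℤ) := Int.natCast_nonneg k
  rcases lt_trichotomy (k+1) q with h | h | h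
  · -- k+1 < q : first parabola, second difference
    have w : Wc p q (k+1) = -2 := by
      unfold Wc; rw [if_pos (show k+1 < q by omega)]
    have e1 : DD p q (k+1) = 2*(MM p q - ((k:ℤ)+2)^2) := by
      unfold DD; rw [if_pos (show k+1 ≤ q by omega)]; push_cast; ring_nf
    have e2 : DD p q (k+2) = 2*(MM p q - ((k:ℤ)+3)^2) := by
      unfold DD; rw [if_pos (show k+2 ≤ q by omega)]; push_cast; ring_nf
    have e0 : DD p q k = 2*(MM p q - ((k:ℤ)+1)^2) := by
      unfold DD; rw [if_pos (show k ≤ q by omega)]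
    rw [w, e1, e2, e0, if_pos (show k+2 < q+p+1 by omega)]
    nlinarith []
  · -- k+1 = q : the -4 vertex
    subst h
    have w : Wc p (k+1) (k+1) = -4 := by
      unfold Wc; rw [if_neg (by omega), if_pos rfl]
    have e1 : DD p (k+1) (k+1) = 2*(MM p (k+1) - ((k:ℤ)+2)^2) := by
      unfold DD; rw [if_pos (le_refl _)]; push_cast; ring_nf
    have e2 : DD p (k+1) (k+2) = 2*(MM p (k+1) - ((k:ℤ)+2)^2 - 1) := by
      rw [DD_ge p (k+1) (k+2) (by omega)]; push_cast; ring_nf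
    have e0 : DD p (k+1) k = 2*(MM p (k+1) - ((k:ℤ)+1)^2) := by
      unfold DD; rw [if_pos (by omega)]
    rw [w, e1, e2, e0, if_pos (show k+2 < (k+1)+p+1 by omega)]
    have hM : MM p (k+1) = ((k:ℤ)+1+p+2)^2 := by unfold MM; push_cast; ring
    rw [hM]
    nlinarith [mul_nonneg hkc (le_trans zero_le_one hp'), sq_nonneg ((p:ℤ))]
  · -- q < k+1
    have hk1 : q ≤ k := by omega
    rcases Nat.lt_or_ge (k+1) (q+p) with h2 | h2
    · -- interior of the second parabola
      have w : Wc p q (k+1) = -2 := by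
        unfold Wc; rw [if_neg (by omega), if_neg (by omega), if_pos h2]
      have e1 := DD_ge p q (k+1) (by omega)
      have e2 := DD_ge p q (k+2) (by omega)
      have e0 := DD_ge p q k hk1
      rw [w, e1, e2, e0, if_pos (show k+2 < q+p+1 by omega)]
      push_cast
      nlinarith []
    · -- terminal vertex : k+1 = q+p
      have hterm : k + 1 = q + p := by omega
      have w : Wc p q (k+1) = -((q:ℤ)+4) := by
        unfold Wc; rw [if_neg (by omega), if_neg (by omega), if_neg (by omega)]
      have e1 := DD_ge p q (k+1) (by omega)
      have e0 := DD_ge p q k hk1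
      rw [w, e1, e0, if_neg (show ¬ (k+2 < q+p+1) by omega)]
      have hkeq : (k:ℤ) = (q:ℤ) + (p:ℤ) - 1 := by
        have : ((k:ℤ) + 1) = ((q:ℤ) + (p:ℤ)) := by exact_mod_cast hterm
        linarith
      push_cast
      rw [hkeq]
      unfold MM
      nlinarith [mul_nonneg (mul_nonneg hq hq) (le_trans zero_le_one hp'),
        mul_nonneg hq hq, mul_nonneg hq (le_trans zero_le_one hp')]

/-! ### the matrix-vector products `(Q d)_v` are negative -/

lemma key_none (p q : ℕ) : ∑ v', QM p q none v' * dv p q v' < 0 := by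
  rw [sum_V]
  have hcong : ∀ j : Fin (q+p+1), QM p q none (some ⟨2, j⟩) * dv p q (some ⟨2, j⟩)
      = if (j:ℕ) = 0 then DD p q (j:ℕ) else 0 := fun j => by
    rw [show QM p q none (some ⟨2, j⟩) = (if (j:ℕ) = 0 then 1 else 0) from rfl,
        show dv p q (some ⟨2, j⟩) = DD p q (j:ℕ) from rfl]
    split_ifs <;> ring
  rw [Finset.sum_congr rfl (fun j _ => hcong j), fin_sum_ite' (q+p+1) 0 (DD p q),
      if_pos (show 0 < q+p+1 by omega),
      QM_none_none,
      show dv p q none = 2 * MM p q from rfl,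
      show QM p q none (some ⟨0, (0:Fin 1)⟩) = 1 from rfl,
      show dv p q (some ⟨0, (0:Fin 1)⟩) = MM p q from rfl,
      show QM p q none (some ⟨1, (0:Fin 1)⟩) = 1 from rfl,
      show dv p q (some ⟨1, (0:Fin 1)⟩) = MM p q from rfl]
  have := arith_none p q
  linarith

lemma key_a (p q : ℕ) (hp : 1 ≤ p) (j0 : Fin (![1,1,q+p+1] 0)) :
    ∑ v', QM p q (some ⟨0, j0⟩) v' * dv p q v' < 0 := by
  have hj0 : (j0:ℕ) = 0 := by have : (j0:ℕ) < 1 := j0.isLt; omega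
  rw [sum_V]
  have hcong : ∀ j : Fin (q+p+1), QM p q (some ⟨0, j0⟩) (some ⟨2, j⟩) * dv p q (some ⟨2, j⟩)
      = 0 := fun j => by
    rw [show QM p q (some ⟨0, j0⟩) (some ⟨2, j⟩) = 0 from rfl]; ring
  rw [Finset.sum_congr rfl (fun j _ => hcong j), Finset.sum_const_zero,
      show QM p q (some ⟨0, j0⟩) none = (if (j0:ℕ) = 0 then 1 else 0) from rfl, if_pos hj0,
      show dv p q none = 2 * MM p q from rfl,
      show QM p q (some ⟨0, j0⟩) (some ⟨0, (0:Fin 1)⟩)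
        = (if (j0:ℕ) = 0 then -((p:ℤ)+2)
           else if (j0:ℕ) + 1 = 0 ∨ 0 + 1 = (j0:ℕ) then 1 else 0) from rfl, if_pos hj0,
      show dv p q (some ⟨0, (0:Fin 1)⟩) = MM p q from rfl,
      show QM p q (some ⟨0, j0⟩) (some ⟨1, (0:Fin 1)⟩) = 0 from rfl,
      show dv p q (some ⟨1, (0:Fin 1)⟩) = MM p q from rfl]
  have := arith_a p q hp
  linarith

lemma key_b (p q : ℕ) (j0 : Fin (![1,1,q+p+1] 1)) :
    ∑ v', QM p q (some ⟨1, j0⟩) v' * dv p q v' < 0 := by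
  have hj0 : (j0:ℕ) = 0 := by have : (j0:ℕ) < 1 := j0.isLt; omega
  rw [sum_V]
  have hcong : ∀ j : Fin (q+p+1), QM p q (some ⟨1, j0⟩) (some ⟨2, j⟩) * dv p q (some ⟨2, j⟩)
      = 0 := fun j => by
    rw [show QM p q (some ⟨1, j0⟩) (some ⟨2, j⟩) = 0 from rfl]; ring
  rw [Finset.sum_congr rfl (fun j _ => hcong j), Finset.sum_const_zero,
      show QM p q (some ⟨1, j0⟩) none = (if (j0:ℕ) = 0 then 1 else 0) from rfl, if_pos hj0,
      show dv p q none = 2 * MM p q from rfl,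
      show QM p q (some ⟨1, j0⟩) (some ⟨0, (0:Fin 1)⟩) = 0 from rfl,
      show dv p q (some ⟨0, (0:Fin 1)⟩) = MM p q from rfl,
      show QM p q (some ⟨1, j0⟩) (some ⟨1, (0:Fin 1)⟩)
        = (if (j0:ℕ) = 0 then -3
           else if (j0:ℕ) + 1 = 0 ∨ 0 + 1 = (j0:ℕ) then 1 else 0) from rfl, if_pos hj0,
      show dv p q (some ⟨1, (0:Fin 1)⟩) = MM p q from rfl]
  have := arith_b p q
  linarith

lemma key_chain (p q : ℕ) (hp : 1 ≤ p) (j : Fin (![1,1,q+p+1] 2)) :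
    ∑ v', QM p q (some ⟨2, j⟩) v' * dv p q v' < 0 := by
  obtain ⟨jn, hjn⟩ := j
  have hjn' : jn < q + p + 1 := hjn
  rw [sum_V]
  rcases jn with _ | k
  · -- first chain vertex
    have hcong : ∀ j' : Fin (q+p+1),
        QM p q (some ⟨2, ⟨0, hjn⟩⟩) (some ⟨2, j'⟩) * dv p q (some ⟨2, j'⟩)
        = (if (j':ℕ) = 0 then Wc p q 0 * DD p q (j':ℕ) else 0)
          + (if (j':ℕ) = 1 then DD p q (j':ℕ) else 0) := fun j' => by
      rw [show QM p q (some ⟨2, ⟨0, hjn⟩⟩) (some ⟨2, j'⟩)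
            = (if 0 = (j':ℕ) then Wc p q 0
               else if 0 + 1 = (j':ℕ) ∨ (j':ℕ) + 1 = 0 then 1 else 0) from rfl,
          show dv p q (some ⟨2, j'⟩) = DD p q (j':ℕ) from rfl]
      by_cases h0 : (j':ℕ) = 0
      · rw [if_pos (show 0 = (j':ℕ) by omega), if_pos h0,
            if_neg (show ¬ (j':ℕ) = 1 by omega)]
        ring
      · rw [if_neg (show ¬ 0 = (j':ℕ) by omega), if_neg h0]
        by_cases h1 : (j':ℕ) = 1
        · rw [if_pos (show 0 + 1 = (j':ℕ) ∨ (j':ℕ) + 1 = 0 by omega), if_pos h1]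
          ring
        · rw [if_neg (show ¬ (0 + 1 = (j':ℕ) ∨ (j':ℕ) + 1 = 0) by omega), if_neg h1]
          ring
    rw [Finset.sum_congr rfl (fun j' _ => hcong j'), Finset.sum_add_distrib,
        fin_sum_ite' (q+p+1) 0 (fun t => Wc p q 0 * DD p q t),
        fin_sum_ite' (q+p+1) 1 (DD p q),
        if_pos (show 0 < q+p+1 by omega), if_pos (show 1 < q+p+1 by omega),
        show QM p q (some ⟨2, ⟨0, hjn⟩⟩) none = 1 from rfl,
        show dv p q none = 2 * MM p q from rfl,
        show QM p q (some ⟨2, ⟨0, hjn⟩⟩) (some ⟨0, (0:Fin 1)⟩) = 0 from rfl,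
        show dv p q (some ⟨0, (0:Fin 1)⟩) = MM p q from rfl,
        show QM p q (some ⟨2, ⟨0, hjn⟩⟩) (some ⟨1, (0:Fin 1)⟩) = 0 from rfl,
        show dv p q (some ⟨1, (0:Fin 1)⟩) = MM p q from rfl]
    have := arith_c0 p q hp
    linarith
  · -- later chain vertices
    have hcong : ∀ j' : Fin (q+p+1),
        QM p q (some ⟨2, ⟨k+1, hjn⟩⟩) (some ⟨2, j'⟩) * dv p q (some ⟨2, j'⟩)
        = (if (j':ℕ) = k+1 then Wc p q (k+1) * DD p q (j':ℕ) else 0)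
          + (if (j':ℕ) = k+2 then DD p q (j':ℕ) else 0)
          + (if (j':ℕ) = k then DD p q (j':ℕ) else 0) := fun j' => by
      rw [show QM p q (some ⟨2, ⟨k+1, hjn⟩⟩) (some ⟨2, j'⟩)
            = (if k+1 = (j':ℕ) then Wc p q (k+1)
               else if k+1+1 = (j':ℕ) ∨ (j':ℕ) + 1 = k+1 then 1 else 0) from rfl,
          show dv p q (some ⟨2, j'⟩) = DD p q (j':ℕ) from rfl]
      by_cases hA : (j':ℕ) = k+1
      · rw [if_pos (show k+1 = (j':ℕ) by omega), if_pos hA,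
            if_neg (show ¬ (j':ℕ) = k+2 by omega), if_neg (show ¬ (j':ℕ) = k by omega)]
        ring
      · rw [if_neg (show ¬ k+1 = (j':ℕ) by omega), if_neg hA]
        by_cases hB : (j':ℕ) = k+2
        · rw [if_pos (show k+1+1 = (j':ℕ) ∨ (j':ℕ) + 1 = k+1 by omega), if_pos hB,
              if_neg (show ¬ (j':ℕ) = k by omega)]
          ring
        · by_cases hC : (j':ℕ) = k
          · rw [if_pos (show k+1+1 = (j':ℕ) ∨ (j':ℕ) + 1 = k+1 by omega),
                if_neg (show ¬ (j':ℕ) = k+2 by omega), if_pos hC]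
            ring
          · rw [if_neg (show ¬ (k+1+1 = (j':ℕ) ∨ (j':ℕ) + 1 = k+1) by omega),
                if_neg hB, if_neg hC]
            ring
    rw [Finset.sum_congr rfl (fun j' _ => hcong j'), Finset.sum_add_distrib,
        Finset.sum_add_distrib,
        fin_sum_ite' (q+p+1) (k+1) (fun t => Wc p q (k+1) * DD p q t),
        fin_sum_ite' (q+p+1) (k+2) (DD p q),
        fin_sum_ite' (q+p+1) k (DD p q),
        if_pos (show k+1 < q+p+1 by omega), if_pos (show k < q+p+1 by omega),
        show QM p q (some ⟨2, ⟨k+1, hjn⟩⟩) none = 0 from rfl,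
        show dv p q none = 2 * MM p q from rfl,
        show QM p q (some ⟨2, ⟨k+1, hjn⟩⟩) (some ⟨0, (0:Fin 1)⟩) = 0 from rfl,
        show dv p q (some ⟨0, (0:Fin 1)⟩) = MM p q from rfl,
        show QM p q (some ⟨2, ⟨k+1, hjn⟩⟩) (some ⟨1, (0:Fin 1)⟩) = 0 from rfl,
        show dv p q (some ⟨1, (0:Fin 1)⟩) = MM p q from rfl]
    have := arith_chain p q k hp (by omega)
    linarith

lemma key (p q : ℕ) (hp : 1 ≤ p) (v : StarVertex 3 ![1,1,q+p+1]) :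
    ∑ v', QM p q v v' * dv p q v' < 0 := by
  rcases v with _ | ⟨i, j⟩
  · exact key_none p q
  · rcases i with ⟨iv, hi⟩
    interval_cases iv
    · exact key_a p q hp j
    · exact key_b p q j
    · exact key_chain p q hp j

/-! ### the real quadratic form -/

def dR (p q : ℕ) (v : StarVertex 3 ![1,1,q+p+1]) : ℝ := ((dv p q v : ℤ) : ℝ)

lemma dR_def (p q : ℕ) (v : StarVertex 3 ![1,1,q+p+1]) : dR p q v = ((dv p q v : ℤ) : ℝ) := rfl

lemma dR_pos (p q : ℕ) (v : StarVertex 3 ![1,1,q+p+1]) : 0 < dR p q v := by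
  rw [dR_def]; exact_mod_cast dv_pos p q v

lemma sum_QdR_neg (p q : ℕ) (hp : 1 ≤ p) (v : StarVertex 3 ![1,1,q+p+1]) :
    ∑ v', ((QM p q v v' : ℤ) : ℝ) * dR p q v' < 0 := by
  have h1 : (∑ v', ((QM p q v v' : ℤ) : ℝ) * dR p q v')
      = ((∑ v', QM p q v v' * dv p q v' : ℤ) : ℝ) := by
    push_cast [dR_def]
    rfl
  rw [h1]
  exact_mod_cast key p q hp v

end Lpq0

/-- The intersection matrix of the star-shaped weighted tree `Λ_{p,q,0}` for `p ≥ 1` (central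
vertex of weight `-2`; legs: a single vertex of weight `-(p+2)`; a single vertex of weight
`-3`; and a path with weights `-2` (`q` times), `-4`, `-2` (`p-1` times), `-(q+4)`)
is negative definite. -/
theorem Lambda_pq0_negative_definite (p q : ℕ) (hp : 1 ≤ p) :
    ∀ x : StarVertex 3 ![1, 1, q + p + 1] → ℝ, x ≠ 0 →
      ∑ v, ∑ v', ((starMatrix 3 ![1, 1, q + p + 1] (-2)
          ![fun _ => -((p : ℤ) + 2),
            fun _ => -3,
            fun j => if j < q then -2 else if j = q then -4 else
              if j < q + p then -2 else -((q : ℤ) + 4)] v v' : ℤ) : ℝ)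
          * x v * x v' < 0 := by
  intro x hx
  show ∑ v, ∑ v', ((Lpq0.QM p q v v' : ℤ) : ℝ) * x v * x v' < 0
  have hdpos : ∀ v, 0 < Lpq0.dR p q v := Lpq0.dR_pos p q
  have hK : ∀ v, (∑ v', ((Lpq0.QM p q v v' : ℤ) : ℝ) * Lpq0.dR p q v') < 0 :=
    Lpq0.sum_QdR_neg p q hp
  -- Step 1: termwise AM–GM bound
  have step1 : ∑ v, ∑ v', ((Lpq0.QM p q v v' : ℤ) : ℝ) * x v * x v'
      ≤ ∑ v, ∑ v', ((Lpq0.QM p q v v' : ℤ) : ℝ) *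
          ((Lpq0.dR p q v' / Lpq0.dR p q v) * x v ^ 2
            + (Lpq0.dR p q v / Lpq0.dR p q v') * x v' ^ 2) / 2 := by
    refine Finset.sum_le_sum fun v _ => Finset.sum_le_sum fun v' _ => ?_
    by_cases hvv : v = v'
    · subst hvv
      rw [div_self (ne_of_gt (hdpos v))]
      apply le_of_eq; ring
    · have hQ : (0:ℝ) ≤ ((Lpq0.QM p q v v' : ℤ) : ℝ) := by
        exact_mod_cast Lpq0.QM_offdiag_nonneg p q v v' hvv
      have amgm : x v * x v' ≤ ((Lpq0.dR p q v' / Lpq0.dR p q v) * x v ^ 2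
          + (Lpq0.dR p q v / Lpq0.dR p q v') * x v' ^ 2) / 2 := by
        have h1 : Lpq0.dR p q v ≠ 0 := ne_of_gt (hdpos v)
        have h2 : Lpq0.dR p q v' ≠ 0 := ne_of_gt (hdpos v')
        rw [← sub_nonneg]
        have hkey : ((Lpq0.dR p q v' / Lpq0.dR p q v) * x v ^ 2
            + (Lpq0.dR p q v / Lpq0.dR p q v') * x v' ^ 2) / 2 - x v * x v'
            = (Lpq0.dR p q v' * x v - Lpq0.dR p q v * x v') ^ 2
              / (2 * (Lpq0.dR p q v * Lpq0.dR p q v')) := by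
          field_simp
          ring
        rw [hkey]
        exact div_nonneg (sq_nonneg _) (by nlinarith [hdpos v, hdpos v'])
      calc ((Lpq0.QM p q v v' : ℤ) : ℝ) * x v * x v'
          = ((Lpq0.QM p q v v' : ℤ) : ℝ) * (x v * x v') := by ring
        _ ≤ ((Lpq0.QM p q v v' : ℤ) : ℝ) * (((Lpq0.dR p q v' / Lpq0.dR p q v) * x v ^ 2
              + (Lpq0.dR p q v / Lpq0.dR p q v') * x v' ^ 2) / 2) :=
            mul_le_mul_of_nonneg_left amgm hQ
        _ = _ := by ring
  -- Step 2: regroup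
  have step2 : ∑ v, ∑ v', ((Lpq0.QM p q v v' : ℤ) : ℝ) *
          ((Lpq0.dR p q v' / Lpq0.dR p q v) * x v ^ 2
            + (Lpq0.dR p q v / Lpq0.dR p q v') * x v' ^ 2) / 2
      = ∑ v, (x v ^ 2 / Lpq0.dR p q v) * ∑ v', ((Lpq0.QM p q v v' : ℤ) : ℝ) * Lpq0.dR p q v' := by
    have expand : ∀ v v', ((Lpq0.QM p q v v' : ℤ) : ℝ) *
          ((Lpq0.dR p q v' / Lpq0.dR p q v) * x v ^ 2
            + (Lpq0.dR p q v / Lpq0.dR p q v') * x v' ^ 2) / 2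
        = ((Lpq0.QM p q v v' : ℤ) : ℝ) * Lpq0.dR p q v' * (x v ^ 2 / Lpq0.dR p q v) / 2
          + ((Lpq0.QM p q v v' : ℤ) : ℝ) * Lpq0.dR p q v * (x v' ^ 2 / Lpq0.dR p q v') / 2 := by
      intro v v'
      have h1 : Lpq0.dR p q v ≠ 0 := ne_of_gt (hdpos v)
      have h2 : Lpq0.dR p q v' ≠ 0 := ne_of_gt (hdpos v')
      field_simp
    calc ∑ v, ∑ v', ((Lpq0.QM p q v v' : ℤ) : ℝ) *
          ((Lpq0.dR p q v' / Lpq0.dR p q v) * x v ^ 2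
            + (Lpq0.dR p q v / Lpq0.dR p q v') * x v' ^ 2) / 2
        = ∑ v, ∑ v', (((Lpq0.QM p q v v' : ℤ) : ℝ) * Lpq0.dR p q v' * (x v ^ 2 / Lpq0.dR p q v) / 2
            + ((Lpq0.QM p q v v' : ℤ) : ℝ) * Lpq0.dR p q v * (x v' ^ 2 / Lpq0.dR p q v') / 2) :=
          Finset.sum_congr rfl fun v _ => Finset.sum_congr rfl fun v' _ => expand v v'
      _ = (∑ v, ∑ v', ((Lpq0.QM p q v v' : ℤ) : ℝ) * Lpq0.dR p q v' * (x v ^ 2 / Lpq0.dR p q v) / 2)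
          + ∑ v, ∑ v', ((Lpq0.QM p q v v' : ℤ) : ℝ) * Lpq0.dR p q v * (x v' ^ 2 / Lpq0.dR p q v') / 2 := by
          rw [← Finset.sum_add_distrib]
          exact Finset.sum_congr rfl fun v _ => Finset.sum_add_distrib
      _ = (∑ v, ∑ v', ((Lpq0.QM p q v v' : ℤ) : ℝ) * Lpq0.dR p q v' * (x v ^ 2 / Lpq0.dR p q v) / 2)
          + ∑ v, ∑ v', ((Lpq0.QM p q v v' : ℤ) : ℝ) * Lpq0.dR p q v' * (x v ^ 2 / Lpq0.dR p q v) / 2 := by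
          congr 1
          rw [Finset.sum_comm]
          refine Finset.sum_congr rfl fun a _ => Finset.sum_congr rfl fun b _ => ?_
          rw [Lpq0.QM_symm p q b a]
      _ = ∑ v, ((∑ v', ((Lpq0.QM p q v v' : ℤ) : ℝ) * Lpq0.dR p q v' * (x v ^ 2 / Lpq0.dR p q v) / 2)
          + ∑ v', ((Lpq0.QM p q v v' : ℤ) : ℝ) * Lpq0.dR p q v' * (x v ^ 2 / Lpq0.dR p q v) / 2) :=
          Finset.sum_add_distrib.symm
      _ = ∑ v, (x v ^ 2 / Lpq0.dR p q v) * ∑ v', ((Lpq0.QM p q v v' : ℤ) : ℝ) * Lpq0.dR p q v' := by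
          refine Finset.sum_congr rfl fun v _ => ?_
          rw [← two_mul, Finset.mul_sum, Finset.mul_sum]
          exact Finset.sum_congr rfl fun v' _ => by ring
  -- Step 3: conclude
  have step3 : ∑ v, (x v ^ 2 / Lpq0.dR p q v) *
      (∑ v', ((Lpq0.QM p q v v' : ℤ) : ℝ) * Lpq0.dR p q v') < 0 := by
    obtain ⟨v0, hv0⟩ : ∃ v, x v ≠ 0 := by
      by_contra hcon
      push_neg at hcon
      exact hx (funext fun v => hcon v)
    have hterm : ∀ v ∈ Finset.univ, (x v ^ 2 / Lpq0.dR p q v) *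
        (∑ v', ((Lpq0.QM p q v v' : ℤ) : ℝ) * Lpq0.dR p q v') ≤ 0 := fun v _ =>
      mul_nonpos_iff.mpr (Or.inl ⟨div_nonneg (sq_nonneg _) (hdpos v).le, (hK v).le⟩)
    have hv0sq : 0 < x v0 ^ 2 := (sq_nonneg (x v0)).lt_of_ne (Ne.symm (pow_ne_zero 2 hv0))
    have hlt : (x v0 ^ 2 / Lpq0.dR p q v0) *
        (∑ v', ((Lpq0.QM p q v0 v' : ℤ) : ℝ) * Lpq0.dR p q v') < 0 :=
      mul_neg_of_pos_of_neg (div_pos hv0sq (hdpos v0)) (hK v0)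
    calc ∑ v, (x v ^ 2 / Lpq0.dR p q v) *
          (∑ v', ((Lpq0.QM p q v v' : ℤ) : ℝ) * Lpq0.dR p q v')
        < ∑ _v : StarVertex 3 ![1,1,q+p+1], (0:ℝ) :=
          Finset.sum_lt_sum hterm ⟨v0, Finset.mem_univ v0, hlt⟩
      _ = 0 := by simp
  exact lt_of_le_of_lt (le_of_le_of_eq step1 step2) step3
end

section
/- Let Γ be a star-shaped weighted tree with m ≥ 1 legs: the central vertex has weight s_0 ∈ ℤ, and for each i = 1, …, m the i-th leg is a path of n_i ≥ 1 vertices whose weights, listed in order starting from the vertex adjacent to the central vertex, are s_{i,1}, …, s_{i,n_i}, all ≤ −2. For each i set r_i = −1/[s_{i,1}, …, s_{i,n_i}] (so 0 < r_i < 1). If the intersection matrix of Γ is negative definite, then s_0 + r_1 + r_2 + … + r_m < 0; consequently, for any integers u_1, …, u_m with u_1 + u_2 + … + u_m = −s_0, the sum σ_1 + σ_2 + … + σ_m of the numbers σ_i = u_i − r_i is strictly positive. -/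
/-- The negative continued fraction `[a₁, …, a_n] = a₁ − 1/(a₂ − 1/(… − 1/a_n))` of a list of
integers, as a rational number.  (We set `negCF [] = 0`, and since `1/0 = 0` in `ℚ` this gives
`negCF [a] = a`; when every entry is `≤ −2` each tail value is `< −1`, so no division by zero
occurs.) -/
def negCF : List ℤ → ℚ
  | [] => 0
  | a :: l => (a : ℚ) - 1 / negCF l

def dAux (a : ℕ → ℤ) : ℕ → ℕ → ℚ
  | 0, _ => 0
  | (k+1), j => (a j : ℚ) - 1 / dAux a k (j+1)

lemma dAux_eq_negCF (a : ℕ → ℤ) (k j : ℕ) :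
    negCF (List.ofFn fun t : Fin k => a (j + t)) = dAux a k j := by
  induction k generalizing j with
  | zero => simp [negCF, dAux]
  | succ k ih =>
    rw [List.ofFn_succ]
    show negCF (_ :: _) = _
    rw [negCF]
    simp only [dAux, Fin.val_zero, Nat.add_zero]
    congr 2
    rw [← ih (j+1)]
    have : (fun i : Fin k => a (j + ↑i.succ)) = fun t : Fin k => a (j + 1 + ↑t) := by
      funext t
      congr 1
      simp only [Fin.val_succ]
      omega
    rw [this]

lemma dAux_lt (a : ℕ → ℤ) : ∀ k j, 1 ≤ k → (∀ t, t < k → a (j + t) ≤ -2) →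
    dAux a k j < -1 := by
  intro k
  induction k with
  | zero => omega
  | succ k ih =>
    intro j _ ha
    have h0 : (a j : ℚ) ≤ -2 := by
      have := ha 0 (by omega); exact_mod_cast this
    rcases Nat.eq_zero_or_pos k with hk | hk
    · subst hk
      simp only [dAux]
      norm_num
      linarith
    · have hd : dAux a k (j+1) < -1 := by
        apply ih (j+1) hk
        intro t ht
        have := ha (t+1) (by omega)
        convert this using 2
        omega
      have hne : dAux a k (j+1) ≠ 0 := by linarith
      have h1 : (1:ℚ)/dAux a k (j+1) > -1 := by
        rw [gt_iff_lt, lt_div_iff_of_neg (by linarith : dAux a k (j+1) < 0)]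
        linarith
      simp only [dAux]
      linarith

def tAux (a : ℕ → ℤ) (N : ℕ) : ℕ → ℚ
  | 0 => 1
  | (j+1) => if j < N then - tAux a N j / dAux a (N - j) j else 0

lemma tAux_top (a : ℕ → ℤ) (N : ℕ) : tAux a N (N+1) = 0 := by
  simp [tAux]

lemma dAux_pos_lt (a : ℕ → ℤ) (N : ℕ) (ha : ∀ t, t < N → a t ≤ -2) {j : ℕ}
    (hj : j < N) : dAux a (N - j) j < -1 := by
  apply dAux_lt a (N - j) j (by omega)
  intro t ht
  exact ha (j + t) (by omega)

lemma key_index (a : ℕ → ℤ) (N : ℕ) (ha : ∀ t, t < N → a t ≤ -2) {j : ℕ} (hj : j < N) :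
    (a j : ℚ) * tAux a N (j+1) * tAux a N (j+1)
      = -(tAux a N j * tAux a N (j+1)) - tAux a N (j+1) * tAux a N (j+2) := by
  set T := tAux a N with hT
  set d := dAux a (N - j) j with hd
  set d' := dAux a (N - (j+1)) (j+1) with hd'
  have hdlt : d < -1 := dAux_pos_lt a N ha hj
  have hdne : d ≠ 0 := by intro h; rw [h] at hdlt; norm_num at hdlt
  have hrec : d = (a j : ℚ) - 1 / d' := by
    rw [hd, hd']
    have : N - j = (N - (j+1)) + 1 := by omega
    rw [this]
    rfl
  have hT1 : T (j+1) = - T j / d := by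
    rw [hT]
    show tAux a N (j+1) = _
    rw [tAux, if_pos hj]
  have hTj1 : d * T (j+1) = - T j := by
    rw [hT1]; field_simp
  have hdiv : T (j+1) / d' = - T (j+2) := by
    rcases Nat.lt_or_ge (j+1) N with h | h
    · have hd'lt : d' < -1 := by rw [hd']; exact dAux_pos_lt a N ha h
      have hd'ne : d' ≠ 0 := by intro hh; rw [hh] at hd'lt; norm_num at hd'lt
      have hT2 : T (j+2) = - T (j+1) / d' := by
        rw [hT]
        show tAux a N (j+1+1) = _
        rw [tAux, if_pos h]
      rw [hT2]
      field_simp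
    · have hjN : j + 1 = N := by omega
      have hd'0 : d' = 0 := by rw [hd']; have : N - (j+1) = 0 := by omega
                               rw [this]; rfl
      have hT2 : T (j+2) = 0 := by
        rw [hT]
        show tAux a N (j+1+1) = _
        rw [tAux, if_neg (by omega)]
      rw [hd'0, hT2]
      simp
  have haj : (a j : ℚ) = d + 1 / d' := by rw [hrec]; ring
  calc (a j : ℚ) * T (j+1) * T (j+1) = (d * T (j+1)) * T (j+1) + (T (j+1) / d') * T (j+1) := by
        rw [haj]; ring
    _ = -(T j * T (j+1)) - T (j+1) * T (j+2) := by rw [hTj1, hdiv]; ring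

lemma leg_identity (a : ℕ → ℤ) (N : ℕ) (ha : ∀ t, t < N → a t ≤ -2) :
    ∑ j ∈ Finset.range N, ((a j : ℚ) * tAux a N (j+1) * tAux a N (j+1)
      + 2 * (tAux a N (j+1) * tAux a N (j+2))) = - tAux a N 1 := by
  set T := tAux a N with hT
  have : ∀ j ∈ Finset.range N,
      (a j : ℚ) * T (j+1) * T (j+1) + 2 * (T (j+1) * T (j+2))
        = (fun j => T j * T (j+1)) (j+1) - (fun j => T j * T (j+1)) j := by
    intro j hj
    simp only [Finset.mem_range] at hj
    rw [key_index a N ha hj]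
    ring
  rw [Finset.sum_congr rfl this, Finset.sum_range_sub (fun j => T j * T (j+1)) N]
  have h0 : T 0 = 1 := rfl
  have hN : T (N+1) = 0 := tAux_top a N
  rw [hN, h0]
  ring

lemma tAux_one (a : ℕ → ℤ) (N : ℕ) (hN : 1 ≤ N) :
    tAux a N 1 = -1 / dAux a N 0 := by
  show tAux a N (0+1) = _
  rw [tAux, if_pos (show 0 < N by omega)]
  norm_num
  rfl

lemma leg_double (a : ℕ → ℤ) (N : ℕ) (ha : ∀ t, t < N → a t ≤ -2) :
    ∑ j ∈ Finset.range N, ∑ j' ∈ Finset.range N,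
      ((if j = j' then (a j : ℚ) else if j + 1 = j' ∨ j' + 1 = j then 1 else 0)
        * tAux a N (j+1) * tAux a N (j'+1)) = - tAux a N 1 := by
  set T := tAux a N with hT
  have hsplit : ∀ j ∈ Finset.range N, ∀ j' ∈ Finset.range N,
      (if j = j' then (a j : ℚ) else if j + 1 = j' ∨ j' + 1 = j then 1 else 0)
        * T (j+1) * T (j'+1)
      = (if j = j' then (a j : ℚ) * T (j+1) * T (j'+1) else 0)
        + (if j + 1 = j' then T (j+1) * T (j'+1) else 0)
        + (if j' + 1 = j then T (j+1) * T (j'+1) else 0) := by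
    intro j _ j' _
    split_ifs <;> first | ring1 | (exfalso; omega)
  calc ∑ j ∈ Finset.range N, ∑ j' ∈ Finset.range N,
        ((if j = j' then (a j : ℚ) else if j + 1 = j' ∨ j' + 1 = j then 1 else 0)
          * T (j+1) * T (j'+1))
      = ∑ j ∈ Finset.range N, ∑ j' ∈ Finset.range N,
          ((if j = j' then (a j : ℚ) * T (j+1) * T (j'+1) else 0)
            + (if j + 1 = j' then T (j+1) * T (j'+1) else 0)
            + (if j' + 1 = j then T (j+1) * T (j'+1) else 0)) := by
        exact Finset.sum_congr rfl fun j hj => Finset.sum_congr rfl fun j' hj' =>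
          hsplit j hj j' hj'
    _ = (∑ j ∈ Finset.range N, ∑ j' ∈ Finset.range N,
          (if j = j' then (a j : ℚ) * T (j+1) * T (j'+1) else 0))
        + (∑ j ∈ Finset.range N, ∑ j' ∈ Finset.range N,
          (if j + 1 = j' then T (j+1) * T (j'+1) else 0))
        + (∑ j ∈ Finset.range N, ∑ j' ∈ Finset.range N,
          (if j' + 1 = j then T (j+1) * T (j'+1) else 0)) := by
        simp only [Finset.sum_add_distrib]
    _ = - T 1 := by
        have h1 : (∑ j ∈ Finset.range N, ∑ j' ∈ Finset.range N,
            (if j = j' then (a j : ℚ) * T (j+1) * T (j'+1) else 0))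
            = ∑ j ∈ Finset.range N, (a j : ℚ) * T (j+1) * T (j+1) := by
          apply Finset.sum_congr rfl
          intro j hj
          rw [Finset.sum_ite_eq (Finset.range N) j
            (fun j' => (a j : ℚ) * T (j+1) * T (j'+1)), if_pos hj]
        have hzero : ∀ j ∈ Finset.range N,
            (if j + 1 ∈ Finset.range N then T (j+1) * T (j+1+1) else 0)
              = T (j+1) * T (j+2) := by
          intro j hj
          simp only [Finset.mem_range] at hj ⊢
          split_ifs with h
          · rfl
          · have h2 : T (j + 2) = 0 := by
              show tAux a N (j+2) = 0
              rw [show j + 2 = N + 1 by omega]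
              exact tAux_top a N
            rw [h2]
            ring
        have h2 : (∑ j ∈ Finset.range N, ∑ j' ∈ Finset.range N,
            (if j + 1 = j' then T (j+1) * T (j'+1) else 0))
            = ∑ j ∈ Finset.range N, T (j+1) * T (j+2) := by
          apply Finset.sum_congr rfl
          intro j hj
          rw [Finset.sum_ite_eq (Finset.range N) (j+1)
            (fun j' => T (j+1) * T (j'+1))]
          exact hzero j hj
        have h3 : (∑ j ∈ Finset.range N, ∑ j' ∈ Finset.range N,
            (if j' + 1 = j then T (j+1) * T (j'+1) else 0))
            = ∑ j ∈ Finset.range N, T (j+1) * T (j+2) := by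
          rw [Finset.sum_comm]
          apply Finset.sum_congr rfl
          intro j' hj'
          rw [Finset.sum_ite_eq (Finset.range N) (j'+1)
            (fun j => T (j+1) * T (j'+1))]
          rw [show (if j' + 1 ∈ Finset.range N then T (j'+1+1) * T (j'+1) else 0)
            = (if j' + 1 ∈ Finset.range N then T (j'+1) * T (j'+1+1) else 0) by
              split_ifs <;> ring]
          exact hzero j' hj'
        rw [h1, h2, h3]
        have := leg_identity a N ha
        rw [Finset.sum_add_distrib] at this
        rw [← Finset.mul_sum] at this
        linarith

def starX (m : ℕ) (n : Fin m → ℕ) (s : Fin m → ℕ → ℤ) : StarVertex m n → ℚ :=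
  fun v => match v with
  | none => 1
  | some p => tAux (s p.1) (n p.1) ((p.2 : ℕ) + 1)

lemma starSumVal (m : ℕ) (s0 : ℤ) (n : Fin m → ℕ) (hn : ∀ i, 1 ≤ n i)
    (s : Fin m → ℕ → ℤ) (hs : ∀ i, ∀ j < n i, s i j ≤ -2) :
    ∑ v : StarVertex m n, ∑ v' : StarVertex m n,
        ((starMatrix m n s0 s v v' : ℤ) : ℚ) * starX m n s v * starX m n s v'
      = (s0 : ℚ) + ∑ i, tAux (s i) (n i) 1 := by
  have hsig : ∀ f : ((i : Fin m) × Fin (n i)) → ℚ,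
      ∑ p : (i : Fin m) × Fin (n i), f p = ∑ i, ∑ j, f ⟨i, j⟩ := fun f => by
    rw [← Finset.univ_sigma_univ, Finset.sum_sigma]
  rw [Fintype.sum_option]
  have hrow : ∑ v' : StarVertex m n,
      ((starMatrix m n s0 s none v' : ℤ) : ℚ) * starX m n s none * starX m n s v'
        = (s0 : ℚ) + ∑ i, tAux (s i) (n i) 1 := by
    rw [Fintype.sum_option, hsig]
    have h0 : ((starMatrix m n s0 s none none : ℤ) : ℚ) * starX m n s none
        * starX m n s none = (s0 : ℚ) := by
      show ((s0 : ℤ) : ℚ) * 1 * 1 = _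
      ring
    rw [h0]
    congr 1
    apply Finset.sum_congr rfl
    intro i _
    have hterm : ∀ j : Fin (n i),
        ((starMatrix m n s0 s none (some ⟨i, j⟩) : ℤ) : ℚ) * starX m n s none
            * starX m n s (some ⟨i, j⟩)
          = (fun jj : ℕ => if jj = 0 then tAux (s i) (n i) (jj + 1) else 0) (j : ℕ) := by
      intro j
      show ((if (j : ℕ) = 0 then (1:ℤ) else 0 : ℤ) : ℚ) * 1 * tAux (s i) (n i) ((j:ℕ)+1) = _
      by_cases h : (j : ℕ) = 0 <;> simp [h]
    rw [Finset.sum_congr rfl (fun j _ => hterm j),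
      Fin.sum_univ_eq_sum_range (fun jj : ℕ => if jj = 0 then tAux (s i) (n i) (jj + 1) else 0) (n i),
      Finset.sum_ite_eq' (Finset.range (n i)) 0 (fun jj => tAux (s i) (n i) (jj + 1)),
      if_pos (Finset.mem_range.mpr (hn i))]
  have hcol : ∑ p : (i : Fin m) × Fin (n i), ∑ v' : StarVertex m n,
      ((starMatrix m n s0 s (some p) v' : ℤ) : ℚ) * starX m n s (some p) * starX m n s v'
        = 0 := by
    rw [hsig]
    apply Finset.sum_eq_zero
    intro i _
    set N := n i with hN
    set a := s i with ha
    set T := tAux a N with hT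
    have hinner : ∀ j : Fin N, ∑ v' : StarVertex m n,
        ((starMatrix m n s0 s (some ⟨i, j⟩) v' : ℤ) : ℚ) * starX m n s (some ⟨i, j⟩)
          * starX m n s v'
        = (fun jj : ℕ =>
            (if jj = 0 then T (jj + 1) else 0)
            + ∑ j' ∈ Finset.range N,
                ((if jj = j' then (a jj : ℚ) else if jj + 1 = j' ∨ j' + 1 = jj then 1 else 0)
                  * T (jj + 1) * T (j' + 1))) (j : ℕ) := by
      intro j
      rw [Fintype.sum_option, hsig]
      congr 1
      · show ((if (j : ℕ) = 0 then (1:ℤ) else 0 : ℤ) : ℚ) * T ((j:ℕ)+1) * 1 = _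
        by_cases h : (j : ℕ) = 0 <;> simp [h]
      · rw [Finset.sum_eq_single_of_mem i (Finset.mem_univ i)]
        · have hterm : ∀ j' : Fin N,
              ((starMatrix m n s0 s (some ⟨i, j⟩) (some ⟨i, j'⟩) : ℤ) : ℚ)
                  * starX m n s (some ⟨i, j⟩) * starX m n s (some ⟨i, j'⟩)
                = (fun jj' : ℕ =>
                    (if (j:ℕ) = jj' then (a (j:ℕ) : ℚ)
                      else if (j:ℕ) + 1 = jj' ∨ jj' + 1 = (j:ℕ) then 1 else 0)
                    * T ((j:ℕ) + 1) * T (jj' + 1)) (j' : ℕ) := by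
            intro j'
            show ((if (i:ℕ) = (i:ℕ) then
                (if (j:ℕ) = (j':ℕ) then a (j:ℕ)
                  else if (j:ℕ) + 1 = (j':ℕ) ∨ (j':ℕ) + 1 = (j:ℕ) then 1 else 0)
                else 0 : ℤ) : ℚ) * T ((j:ℕ)+1) * T ((j':ℕ)+1) = _
            rw [if_pos rfl]
            push_cast
            split_ifs <;> push_cast <;> ring
          rw [Finset.sum_congr rfl (fun j' _ => hterm j'),
            Fin.sum_univ_eq_sum_range (fun jj' : ℕ =>
              (if (j:ℕ) = jj' then (a (j:ℕ) : ℚ)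
                else if (j:ℕ) + 1 = jj' ∨ jj' + 1 = (j:ℕ) then 1 else 0)
              * T ((j:ℕ) + 1) * T (jj' + 1)) N]
        · intro i' _ hne
          apply Finset.sum_eq_zero
          intro j' _
          have : ((i : ℕ) = (i' : ℕ)) = False := by
            simp only [eq_iff_iff, iff_false]
            exact fun h => hne (Fin.ext h.symm)
          show ((if (i:ℕ) = (i':ℕ) then _ else 0 : ℤ) : ℚ) * _ * _ = 0
          rw [if_neg (by rw [this]; exact id)]
          push_cast
          ring
    rw [Finset.sum_congr rfl (fun j _ => hinner j)]
    rw [Fin.sum_univ_eq_sum_range (fun jj : ℕ =>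
            (if jj = 0 then T (jj + 1) else 0)
            + ∑ j' ∈ Finset.range N,
                ((if jj = j' then (a jj : ℚ) else if jj + 1 = j' ∨ j' + 1 = jj then 1 else 0)
                  * T (jj + 1) * T (j' + 1))) N]
    rw [Finset.sum_add_distrib]
    have h1 : ∑ jj ∈ Finset.range N, (if jj = 0 then T (jj + 1) else 0) = T 1 := by
      rw [Finset.sum_ite_eq' (Finset.range N) 0 (fun jj => T (jj + 1)),
        if_pos (Finset.mem_range.mpr (hn i))]
    have h2 := leg_double a N (fun t ht => hs i t ht)
    rw [h1]
    rw [← hT] at h2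
    rw [h2]
    ring
  rw [hrow, hcol]
  ring

lemma negCF_ofFn_eq (a : ℕ → ℤ) (N : ℕ) :
    negCF (List.ofFn fun j : Fin N => a ↑j) = dAux a N 0 := by
  rw [← dAux_eq_negCF a N 0]
  have : (fun t : Fin N => a (0 + ↑t)) = fun j : Fin N => a ↑j := by
    funext t
    congr 1
    omega
  rw [this]

lemma neg_one_div_negCF (a : ℕ → ℤ) (N : ℕ) (hN : 1 ≤ N) :
    -1 / negCF (List.ofFn fun j : Fin N => a ↑j) = tAux a N 1 := by
  rw [negCF_ofFn_eq, tAux_one a N hN]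


/-- Let `Γ` be a star-shaped weighted tree with `m ≥ 1` legs: the central vertex has weight
`s0`, and the `i`-th leg is a path of `n i ≥ 1` vertices whose weights, starting from the
vertex adjacent to the central vertex, are `s i 0, …, s i (n i − 1)`, all `≤ −2`.  For each
`i` set `r_i = −1/[s i 0, …, s i (n i − 1)]` (a number in `(0,1)`).  If the intersection
matrix of `Γ` is negative definite, then `s0 + r_1 + … + r_m < 0`; consequently, for any
integers `u 1, …, u m` with `u 1 + … + u m = −s0`, the sum of the numbers
`σ_i = u i − r_i` is strictly positive. -/
theorem negative_definite_implies_sum_sigma_pos (m : ℕ) (hm : 1 ≤ m) (s0 : ℤ)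
    (n : Fin m → ℕ) (hn : ∀ i, 1 ≤ n i) (s : Fin m → ℕ → ℤ)
    (hs : ∀ i, ∀ j < n i, s i j ≤ -2)
    (hneg : ∀ x : StarVertex m n → ℝ, x ≠ 0 →
      ∑ v, ∑ v', ((starMatrix m n s0 s v v' : ℤ) : ℝ) * x v * x v' < 0) :
    (s0 : ℚ) + ∑ i, (-1 / negCF (List.ofFn fun j : Fin (n i) => s i j)) < 0 ∧
    ∀ u : Fin m → ℤ, (∑ i, u i) = -s0 →
      0 < ∑ i, ((u i : ℚ) - (-1 / negCF (List.ofFn fun j : Fin (n i) => s i j))) := by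
  have hr : ∀ i : Fin m, -1 / negCF (List.ofFn fun j : Fin (n i) => s i ↑j)
      = tAux (s i) (n i) 1 := fun i => neg_one_div_negCF (s i) (n i) (hn i)
  have hmain : (s0 : ℚ) + ∑ i, tAux (s i) (n i) 1 < 0 := by
    set x : StarVertex m n → ℝ := fun v => ((starX m n s v : ℚ) : ℝ) with hx
    have hx0 : x ≠ 0 := by
      intro h
      have : x none = 0 := by rw [h]; rfl
      rw [hx] at this
      simp only [starX] at this
      norm_num at this
    have h1 := hneg x hx0
    have h2 : ∑ v, ∑ v', ((starMatrix m n s0 s v v' : ℤ) : ℝ) * x v * x v'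
        = (((s0 : ℚ) + ∑ i, tAux (s i) (n i) 1 : ℚ) : ℝ) := by
      rw [← starSumVal m s0 n hn s hs]
      push_cast
      rfl
    rw [h2] at h1
    exact_mod_cast h1
  constructor
  · calc (s0 : ℚ) + ∑ i, (-1 / negCF (List.ofFn fun j : Fin (n i) => s i ↑j))
        = (s0 : ℚ) + ∑ i, tAux (s i) (n i) 1 := by
          congr 1
          exact Finset.sum_congr rfl fun i _ => hr i
      _ < 0 := hmain
  · intro u hu
    have : ∑ i, ((u i : ℚ) - (-1 / negCF (List.ofFn fun j : Fin (n i) => s i ↑j)))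
        = (-s0 : ℚ) - ∑ i, tAux (s i) (n i) 1 := by
      rw [Finset.sum_sub_distrib]
      rw [Finset.sum_congr rfl fun i _ => hr i]
      have hcast := congrArg (fun z : ℤ => (z : ℚ)) hu
      push_cast at hcast
      rw [hcast]
    rw [this]
    linarith
end
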